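/- Let n ≥ 4 and let (σ0, σ∞, σ1, τ) be a special admissible 4-tuple such that the cycle type of σ1·τ consists of one 4-cycle and n−4 transpositions. If n is even and the fixed-point set of σ1·τ equals {n/2, n, 3n/2, 2n}, then the simultaneous conjugacy class of (σ0, σ∞, σ1, τ) in S_{2n} contains exactly two special 4-tuples; otherwise it contains exactly four special 4-tuples. -/

import Mathlib

/-- A 4-tuple `(σ0, σ∞, σ1, τ)` of permutations of `{1,…,2n}` (realized as permutations of `ℕ`
supported on `{1,…,2n}`) is admissible if `σ0·σ∞·σ1·τ = 1`, `σ0` is a product of `n` disjoint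
transpositions (a fixed-point-free involution of `{1,…,2n}`), `σ∞` is a `2n`-cycle, `σ1` is a
product of `n-2` disjoint transpositions, and `τ` is a transposition. -/
def IsAdmissible (n : ℕ) (σ0 σi σ1 τ : Equiv.Perm ℕ) : Prop :=
  σ0 * σi * σ1 * τ = 1 ∧
  σ0 * σ0 = 1 ∧ {x | σ0 x ≠ x} = Set.Icc 1 (2*n) ∧
  σi.IsCycle ∧ {x | σi x ≠ x} = Set.Icc 1 (2*n) ∧
  σ1 * σ1 = 1 ∧ {x | σ1 x ≠ x} ⊆ Set.Icc 1 (2*n) ∧ {x | σ1 x ≠ x}.ncard = 2*(n-2) ∧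
  ∃ a b, a ≠ b ∧ a ∈ Set.Icc 1 (2*n) ∧ b ∈ Set.Icc 1 (2*n) ∧ τ = Equiv.swap a b

/-- An admissible tuple is special if `σ∞` is the explicit cycle `j ↦ j-1` (`1 ↦ 2n`) and both
`σ1` and `τ` fix `2n`. -/
def IsSpecial (n : ℕ) (σ0 σi σ1 τ : Equiv.Perm ℕ) : Prop :=
  IsAdmissible n σ0 σi σ1 τ ∧
  σi 1 = 2*n ∧ (∀ j, 2 ≤ j → j ≤ 2*n → σi j = j - 1) ∧
  σ1 (2*n) = 2*n ∧ τ (2*n) = 2*n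

/-- `σ` has cycle type consisting of one 4-cycle and `n-4` transpositions: it is the product of
the 4-cycle `(a,b,c,e)` (sending `a ↦ b ↦ c ↦ e ↦ a`) and a disjoint product `π` of `n-4`
disjoint transpositions. -/
def HasFourCycleType (n : ℕ) (σ : Equiv.Perm ℕ) : Prop :=
  ∃ a b c e π : _, a ≠ b ∧ a ≠ c ∧ a ≠ e ∧ b ≠ c ∧ b ≠ e ∧ c ≠ e ∧
    (π : Equiv.Perm ℕ) * π = 1 ∧
    (∀ x, π x ≠ x → x ∉ ({a, b, c, e} : Set ℕ)) ∧ {x | π x ≠ x}.ncard = 2*(n-4) ∧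
    σ = π * (Equiv.swap a b * Equiv.swap b c * Equiv.swap c e)

namespace Stmt19

/-- Core combinatorial data: `f` on `ZMod (2n)` with one 4-cycle `A→B→C→E→A`,
involutive elsewhere, satisfying the dihedral relation, with `2*n-8` two-cycle points,
and fixing `0`. -/
structure Core (n : ℕ) where
  f : ZMod (2*n) → ZMod (2*n)
  A : ZMod (2*n)
  B : ZMod (2*n)
  C : ZMod (2*n)
  E : ZMod (2*n)
  hn : 4 ≤ n
  hrel : ∀ z, f (f z - 1) = z + 1
  hAB : A ≠ B
  hAC : A ≠ C
  hAE : A ≠ E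
  hBC : B ≠ C
  hBE : B ≠ E
  hCE : C ≠ E
  hfA : f A = B
  hfB : f B = C
  hfC : f C = E
  hfE : f E = A
  h2 : ∀ z, z ∉ ({A, B, C, E} : Set (ZMod (2*n))) → f (f z) = z
  hT : {z | f z ≠ z ∧ z ∉ ({A, B, C, E} : Set (ZMod (2*n)))}.ncard = 2*n - 8
  h0 : f 0 = 0

namespace Core

open scoped Classical

variable {n : ℕ}

lemma nz (K : Core n) : NeZero (2*n) := ⟨by have h := K.hn; omega⟩

variable (K : Core n)

def QS : Set (ZMod (2*n)) := {K.A, K.B, K.C, K.E}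
def FS : Set (ZMod (2*n)) := {z | K.f z = z}
def TS : Set (ZMod (2*n)) := {z | K.f z ≠ z ∧ z ∉ K.QS}

lemma hT' : K.TS.ncard = 2*n - 8 := K.hT

lemma fQS : ∀ z ∈ K.QS, K.f z ∈ K.QS := by
  intro z hz
  rcases hz with h | h | h | h <;> subst h <;>
    simp [QS, K.hfA, K.hfB, K.hfC, K.hfE, Set.mem_insert_iff]

lemma fQS_ne : ∀ z ∈ K.QS, K.f z ≠ z := by
  intro z hz
  rcases hz with h | h | h | h <;> subst h <;>
    simp [K.hfA, K.hfB, K.hfC, K.hfE, K.hAB.symm, K.hBC.symm, K.hCE.symm, K.hAE]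

lemma f2QS_ne : ∀ z ∈ K.QS, K.f (K.f z) ≠ z := by
  intro z hz
  rcases hz with h | h | h | h <;> subst h <;>
    simp [K.hfA, K.hfB, K.hfC, K.hfE, K.hAC, K.hBE, K.hAC.symm, K.hBE.symm]

lemma f3QS_ne : ∀ z ∈ K.QS, K.f (K.f (K.f z)) ≠ z := by
  intro z hz
  rcases hz with h | h | h | h <;> subst h <;>
    simp [K.hfA, K.hfB, K.hfC, K.hfE, K.hAE.symm, K.hAB, K.hBC, K.hCE]

lemma f4QS : ∀ z ∈ K.QS, K.f (K.f (K.f (K.f z))) = z := by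
  intro z hz
  rcases hz with h | h | h | h <;> subst h <;>
    simp [K.hfA, K.hfB, K.hfC, K.hfE]

lemma mem_QS_iff (z : ZMod (2*n)) : z ∈ K.QS ↔ K.f (K.f z) ≠ z := by
  constructor
  · exact K.f2QS_ne z
  · intro h; by_contra hq; exact h (K.h2 z hq)

lemma zero_mem_FS : (0 : ZMod (2*n)) ∈ K.FS := K.h0

lemma FS_disj_QS : ∀ z ∈ K.FS, z ∉ K.QS := by
  intro z hz hq; exact K.fQS_ne z hq hz

lemma fTS : ∀ z ∈ K.TS, K.f z ∈ K.TS := by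
  intro z hz
  obtain ⟨h1, h2⟩ := hz
  have hff : K.f (K.f z) = z := K.h2 z h2
  refine ⟨by rw [hff]; exact fun h => h1 h.symm, ?_⟩
  intro hq
  have : K.f (K.f (K.f z)) ≠ K.f z := K.f2QS_ne _ hq
  rw [hff] at this
  exact this rfl

lemma trichotomy (z : ZMod (2*n)) : z ∈ K.FS ∨ z ∈ K.TS ∨ z ∈ K.QS := by
  by_cases h1 : K.f z = z
  · exact Or.inl h1
  by_cases h2 : z ∈ K.QS
  · exact Or.inr (Or.inr h2)
  · exact Or.inr (Or.inl ⟨h1, h2⟩)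

lemma QS_ncard : K.QS.ncard = 4 := by
  rw [QS, Set.ncard_insert_of_notMem (by simp [K.hAB, K.hAC, K.hAE]),
    Set.ncard_insert_of_notMem (by simp [K.hBC, K.hBE]),
    Set.ncard_insert_of_notMem (by simp [K.hCE]), Set.ncard_singleton]

lemma FS_ncard : K.FS.ncard = 4 := by
  have hnz : NeZero (2*n) := K.nz
  have hdisj1 : Disjoint K.TS K.QS := by
    rw [Set.disjoint_left]; exact fun z hz => hz.2
  have hdisj2 : Disjoint K.FS (K.TS ∪ K.QS) := by
    rw [Set.disjoint_left]
    rintro z hz (ht | hq)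
    · exact ht.1 hz
    · exact K.FS_disj_QS z hz hq
  have hcover : K.FS ∪ (K.TS ∪ K.QS) = Set.univ := by
    ext z; simpa using K.trichotomy z
  have h1 : (K.TS ∪ K.QS).ncard = (2*n-8) + 4 := by
    rw [Set.ncard_union_eq hdisj1 (Set.toFinite _) (Set.toFinite _), K.hT', K.QS_ncard]
  have h2 : (Set.univ : Set (ZMod (2*n))).ncard = 2*n := by
    simp [Set.ncard_univ, Nat.card_eq_fintype_card, ZMod.card]
  have h3 := Set.ncard_union_eq hdisj2 (Set.toFinite _) (Set.toFinite _)
  rw [hcover, h1, h2] at h3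
  have := K.hn
  omega

/-! ### Walks from fixed points -/

lemma castInj {m : ℕ} {a b : ℕ} (ha : a < m) (hb : b < m) (h : (a : ZMod m) = b) : a = b := by
  have : NeZero m := ⟨by omega⟩
  have h1 := ZMod.val_cast_of_lt ha
  have h2 := ZMod.val_cast_of_lt hb
  rw [h] at h1; omega

lemma no_dvd {m a : ℕ} (h0 : 0 < a) (h1 : a < m) (h : m ∣ a) : False := by
  have := Nat.le_of_dvd h0 h; omega

lemma castDvd {m : ℕ} [NeZero m] {a : ℕ} (h : (a : ZMod m) = 0) : m ∣ a :=
  (ZMod.natCast_eq_zero_iff a m).mp h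

lemma valCast {m : ℕ} [NeZero m] (a : ZMod m) : ((a.val : ℕ) : ZMod m) = a :=
  (ZMod.natCast_val a).trans (ZMod.cast_id' ▸ rfl)

def el (x : ZMod (2*n)) (k : ℕ) : ZMod (2*n) := x - 1 - (k : ZMod (2*n))
def er (x : ZMod (2*n)) (k : ℕ) : ZMod (2*n) := x + 1 + (k : ZMod (2*n))

omit K in lemma el_succ (x : ZMod (2*n)) (k : ℕ) : el x (k+1) = el x k - 1 := by
  simp only [el]; push_cast; ring

omit K in lemma er_succ (x : ZMod (2*n)) (k : ℕ) : er x (k+1) = er x k + 1 := by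
  simp only [er]; push_cast; ring

lemma dExists (x : ZMod (2*n)) : ∃ k : ℕ, el x k ∉ K.TS := by
  have : NeZero (2*n) := K.nz
  refine ⟨(x - 1 - K.A).val, ?_⟩
  have : el x (x - 1 - K.A).val = K.A := by
    simp only [el, valCast]; ring
  rw [this]
  intro hA; exact hA.2 (by simp [QS])

noncomputable def d (x : ZMod (2*n)) : ℕ := Nat.find (K.dExists x)

lemma el_mem_TS {x : ZMod (2*n)} {k : ℕ} (h : k < K.d x) : el x k ∈ K.TS :=
  not_not.mp (Nat.find_min (K.dExists x) h)

lemma el_d_not_TS (x : ZMod (2*n)) : el x (K.d x) ∉ K.TS := Nat.find_spec (K.dExists x)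

lemma d_le {x : ZMod (2*n)} {k : ℕ} (h : el x k ∉ K.TS) : K.d x ≤ k :=
  Nat.find_le h

lemma le_d {x : ZMod (2*n)} {k : ℕ} (h : ∀ j < k, el x j ∈ K.TS) : k ≤ K.d x := by
  by_contra hc
  exact K.el_d_not_TS x (h _ (by omega))

lemma walk {x : ZMod (2*n)} (hx : x ∈ K.FS) : ∀ k ≤ K.d x, K.f (el x k) = er x k := by
  intro k
  induction k with
  | zero =>
    intro _
    have h := K.hrel x
    rw [hx] at h
    simpa [el, er] using h
  | succ k ih =>
    intro hk
    have hk' : k < K.d x := by omega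
    have h1 : K.f (el x k) = er x k := ih (by omega)
    have hTS : el x k ∈ K.TS := K.el_mem_TS hk'
    have h2 : K.f (er x k) = el x k := by
      rw [← h1]; exact K.h2 _ hTS.2
    have h := K.hrel (er x k)
    rw [h2, ← el_succ, ← er_succ] at h
    exact h

lemma walk2 {x : ZMod (2*n)} (hx : x ∈ K.FS) {k : ℕ} (hk : k < K.d x) :
    K.f (er x k) = el x k := by
  rw [← K.walk hx k (by omega)]
  exact K.h2 _ (K.el_mem_TS hk).2

lemma er_mem_TS {x : ZMod (2*n)} (hx : x ∈ K.FS) {k : ℕ} (hk : k < K.d x) :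
    er x k ∈ K.TS := by
  have := K.fTS _ (K.el_mem_TS hk)
  rwa [K.walk hx k (by omega)] at this

lemma d_le_n1 {x : ZMod (2*n)} (hx : x ∈ K.FS) : K.d x ≤ n - 1 := by
  have : NeZero (2*n) := K.nz
  have hn := K.hn
  by_contra hc
  have hk : n - 1 < K.d x := by omega
  have hTS := K.el_mem_TS hk
  have hw := K.walk hx (n-1) (by omega)
  have heq : er x (n-1) = el x (n-1) := by
    simp only [el, er]
    have h2n : ((2*n : ℕ) : ZMod (2*n)) = 0 := ZMod.natCast_self _
    have : ((n - 1 : ℕ) : ZMod (2*n)) = (n : ZMod (2*n)) - 1 := by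
      push_cast [Nat.cast_sub (by omega : 1 ≤ n)]; ring
    rw [this]
    have : ((2*n : ℕ) : ZMod (2*n)) = (n : ZMod (2*n)) + n := by push_cast; ring
    rw [this] at h2n
    linear_combination h2n
  rw [heq] at hw
  exact hTS.1 hw

/-- The endpoint of the walk. -/
noncomputable def p (x : ZMod (2*n)) : ZMod (2*n) := el x (K.d x)

lemma nest_sub_TS {x : ZMod (2*n)} (hx : x ∈ K.FS) :
    (el x '' (Set.Iio (K.d x)) ∪ er x '' (Set.Iio (K.d x))) ⊆ K.TS := by
  rintro z (⟨k, hk, rfl⟩ | ⟨k, hk, rfl⟩)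
  · exact K.el_mem_TS hk
  · exact K.er_mem_TS hx hk

lemma el_injOn {x : ZMod (2*n)} (hx : x ∈ K.FS) :
    Set.InjOn (el x) (Set.Iio (K.d x)) := by
  intro k hk k' hk' h
  have hd := K.d_le_n1 hx
  have hn := K.hn
  simp only [el] at h
  have : (k : ZMod (2*n)) = k' := by linear_combination -h
  exact castInj (by simp at hk; omega) (by simp at hk'; omega) this

lemma er_injOn {x : ZMod (2*n)} (hx : x ∈ K.FS) :
    Set.InjOn (er x) (Set.Iio (K.d x)) := by
  intro k hk k' hk' h
  have hd := K.d_le_n1 hx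
  have hn := K.hn
  simp only [er] at h
  have : (k : ZMod (2*n)) = k' := by linear_combination h
  exact castInj (by simp at hk; omega) (by simp at hk'; omega) this

lemma el_ne_er {x : ZMod (2*n)} (hx : x ∈ K.FS) {k k' : ℕ}
    (hk : k < K.d x) (hk' : k' < K.d x) : el x k ≠ er x k' := by
  have : NeZero (2*n) := K.nz
  have hd := K.d_le_n1 hx
  have hn := K.hn
  intro h
  simp only [el, er] at h
  have : ((k + k' + 2 : ℕ) : ZMod (2*n)) = 0 := by push_cast; linear_combination -h
  exact no_dvd (by omega) (by omega) (castDvd this)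

lemma nest_ncard {x : ZMod (2*n)} (hx : x ∈ K.FS) :
    (el x '' (Set.Iio (K.d x)) ∪ er x '' (Set.Iio (K.d x))).ncard = 2 * K.d x := by
  have hIio : (Set.Iio (K.d x)) = ((Finset.range (K.d x) : Finset ℕ) : Set ℕ) := by
    simp [Finset.coe_range]
  have h1 : (el x '' (Set.Iio (K.d x))).ncard = K.d x := by
    rw [Set.ncard_image_of_injOn (K.el_injOn hx), hIio, Set.ncard_coe_finset,
      Finset.card_range]
  have h2 : (er x '' (Set.Iio (K.d x))).ncard = K.d x := by
    rw [Set.ncard_image_of_injOn (K.er_injOn hx), hIio, Set.ncard_coe_finset,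
      Finset.card_range]
  have hdisj : Disjoint (el x '' (Set.Iio (K.d x))) (er x '' (Set.Iio (K.d x))) := by
    rw [Set.disjoint_left]
    rintro z ⟨k, hk, rfl⟩ ⟨k', hk', h⟩
    exact K.el_ne_er hx hk hk' h.symm
  rw [Set.ncard_union_eq hdisj (Set.toFinite _) (Set.toFinite _), h1, h2]
  omega

lemma nest_ncard_le {x : ZMod (2*n)} (hx : x ∈ K.FS) : 2 * K.d x ≤ 2*n - 8 := by
  have : NeZero (2*n) := K.nz
  rw [← K.hT', ← K.nest_ncard hx]
  exact Set.ncard_le_ncard (K.nest_sub_TS hx) (Set.toFinite _)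

lemma d_le_n4 {x : ZMod (2*n)} (hx : x ∈ K.FS) : K.d x ≤ n - 4 := by
  have := K.nest_ncard_le hx
  have := K.hn
  omega

lemma fp {x : ZMod (2*n)} (hx : x ∈ K.FS) : K.f (K.p x) = er x (K.d x) :=
  K.walk hx _ le_rfl

lemma p_mem_QS {x : ZMod (2*n)} (hx : x ∈ K.FS) : K.p x ∈ K.QS := by
  have : NeZero (2*n) := K.nz
  have hn := K.hn
  have hnot := K.el_d_not_TS x
  have hne : K.f (K.p x) ≠ K.p x := by
    rw [K.fp hx]
    intro h
    simp only [el, er, p] at h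
    have : ((2 * K.d x + 2 : ℕ) : ZMod (2*n)) = 0 := by push_cast; linear_combination h
    have hd := K.d_le_n4 hx
    exact no_dvd (by omega) (by omega) (castDvd this)
  by_contra hq
  exact hnot ⟨hne, hq⟩

lemma p_inj {x y : ZMod (2*n)} (hx : x ∈ K.FS) (hy : y ∈ K.FS) (h : K.p x = K.p y) :
    x = y := by
  have : NeZero (2*n) := K.nz
  have hn := K.hn
  have h2 : er x (K.d x) = er y (K.d y) := by
    rw [← K.fp hx, ← K.fp hy, h]
  simp only [p, el, er] at h h2
  have hdd : ((2 * K.d x : ℕ) : ZMod (2*n)) = ((2 * K.d y : ℕ) : ZMod (2*n)) := by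
    push_cast; linear_combination h2 - h
  have hdx := K.d_le_n4 hx
  have hdy := K.d_le_n4 hy
  have : K.d x = K.d y := by
    have := castInj (m := 2*n) (by omega) (by omega) hdd; omega
  rw [this] at h
  linear_combination h

/-- Walks from distinct fixed points are disjoint (same side). -/
lemma cross_el_el {x y : ZMod (2*n)} (hx : x ∈ K.FS) (hy : y ∈ K.FS) {k k' : ℕ}
    (hk : k < K.d x) (hk' : k' < K.d y) (hle : k' ≤ k) (h : el x k = el y k') : x = y := by
  have harith : ∀ i : ℕ, el x (k - k' + i) = el y i := by
    intro i
    simp only [el] at h ⊢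
    have : ((k - k' + i : ℕ) : ZMod (2*n)) = (k : ZMod (2*n)) - k' + i := by
      push_cast [Nat.cast_sub hle]; ring
    rw [this]
    linear_combination h
  have hdx : K.d x = k - k' + K.d y := by
    refine le_antisymm (K.d_le ?_) (K.le_d ?_)
    · rw [harith]; exact K.el_d_not_TS y
    · intro j hj
      rcases lt_or_ge j k with hjk | hjk
      · exact K.el_mem_TS (by omega)
      · have : j = k - k' + (j - (k - k')) := by omega
        rw [this, harith]
        exact K.el_mem_TS (by omega)
  refine K.p_inj hx hy ?_
  simp only [p]
  rw [hdx, harith]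

/-- Walks from fixed points never meet in opposite orientation. -/
lemma cross_el_er {x y : ZMod (2*n)} (hx : x ∈ K.FS) (hy : y ∈ K.FS) {k k' : ℕ}
    (hk : k < K.d x) (hk' : k' < K.d y) (h : el x k = er y k') : False := by
  have : NeZero (2*n) := K.nz
  have harith : ∀ i : ℕ, i ≤ k' → el x (k + i) = er y (k' - i) := by
    intro i hi
    simp only [el, er] at h ⊢
    have : ((k' - i : ℕ) : ZMod (2*n)) = (k' : ZMod (2*n)) - i := by
      push_cast [Nat.cast_sub hi]; ring
    rw [this]
    push_cast
    linear_combination h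
  have hend : el x (k + k' + 1) = y := by
    simp only [el, er] at h ⊢
    push_cast
    linear_combination h
  have hdx : K.d x = k + k' + 1 := by
    refine le_antisymm (K.d_le ?_) (K.le_d ?_)
    · rw [hend]
      intro hT; exact hT.1 hy
    · intro j hj
      rcases lt_or_ge j k with hjk | hjk
      · exact K.el_mem_TS (by omega)
      · have hj' : j = k + (j - k) := by omega
        rw [hj', harith (j - k) (by omega)]
        exact K.er_mem_TS hy (by omega)
  have : K.p x = y := by simp only [p]; rw [hdx, hend]
  exact K.FS_disj_QS y hy (this ▸ K.p_mem_QS hx)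

lemma cross_el_el' {x y : ZMod (2*n)} (hx : x ∈ K.FS) (hy : y ∈ K.FS) {k k' : ℕ}
    (hk : k < K.d x) (hk' : k' < K.d y) (h : el x k = el y k') : x = y := by
  rcases le_or_gt k' k with hle | hlt
  · exact K.cross_el_el hx hy hk hk' hle h
  · exact (K.cross_el_el hy hx hk' hk (by omega) h.symm).symm

lemma cross_er_er {x y : ZMod (2*n)} (hx : x ∈ K.FS) (hy : y ∈ K.FS) {k k' : ℕ}
    (hk : k < K.d x) (hk' : k' < K.d y) (h : er x k = er y k') : x = y := by
  have h2 : el x k = el y k' := by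
    rw [← K.walk2 hx hk, ← K.walk2 hy hk', h]
  exact K.cross_el_el' hx hy hk hk' h2

/-! ### The geometry of the four fixed points -/

structure Geom where
  x1 : ZMod (2*n)
  x2 : ZMod (2*n)
  x3 : ZMod (2*n)
  m1 : x1 ∈ K.FS
  m2 : x2 ∈ K.FS
  m3 : x3 ∈ K.FS
  q1 : K.p x1 = K.f (K.p 0)
  q2 : K.p x2 = K.f (K.p x1)
  q3 : K.p x3 = K.f (K.p x2)

lemma p_image : K.p '' K.FS = K.QS := by
  have : NeZero (2*n) := K.nz
  refine Set.eq_of_subset_of_ncard_le ?_ ?_ (Set.toFinite _)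
  · rintro z ⟨x, hx, rfl⟩; exact K.p_mem_QS hx
  · rw [K.QS_ncard, Set.ncard_image_of_injOn (fun x hx y hy h => K.p_inj hx hy h),
      K.FS_ncard]

lemma exists_geom : Nonempty (K.Geom) := by
  have h0 : K.p 0 ∈ K.QS := K.p_mem_QS K.zero_mem_FS
  have h1 : K.f (K.p 0) ∈ K.QS := K.fQS _ h0
  rw [← K.p_image] at h1
  obtain ⟨x1, m1, q1⟩ := h1
  have h2 : K.f (K.p x1) ∈ K.QS := K.fQS _ (K.p_mem_QS m1)
  rw [← K.p_image] at h2
  obtain ⟨x2, m2, q2⟩ := h2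
  have h3 : K.f (K.p x2) ∈ K.QS := K.fQS _ (K.p_mem_QS m2)
  rw [← K.p_image] at h3
  obtain ⟨x3, m3, q3⟩ := h3
  exact ⟨⟨x1, x2, x3, m1, m2, m3, q1, q2, q3⟩⟩

variable (G : K.Geom)

lemma q4 : K.f (K.p G.x3) = K.p 0 := by
  rw [G.q3, G.q2, G.q1]
  exact K.f4QS _ (K.p_mem_QS K.zero_mem_FS)

lemma ne10 : G.x1 ≠ 0 := by
  intro h
  have := G.q1
  rw [h] at this
  exact K.fQS_ne _ (K.p_mem_QS K.zero_mem_FS) this.symm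

lemma ne20 : G.x2 ≠ 0 := by
  intro h
  have h2 := G.q2
  rw [h, G.q1] at h2
  exact K.f2QS_ne _ (K.p_mem_QS K.zero_mem_FS) h2.symm

lemma ne21 : G.x2 ≠ G.x1 := by
  intro h
  have h2 := G.q2
  rw [h] at h2
  exact K.fQS_ne _ (K.p_mem_QS G.m1) h2.symm

lemma ne30 : G.x3 ≠ 0 := by
  intro h
  have h3 := G.q3
  rw [h, G.q2, G.q1] at h3
  exact K.f3QS_ne _ (K.p_mem_QS K.zero_mem_FS) h3.symm

lemma ne31 : G.x3 ≠ G.x1 := by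
  intro h
  have h3 := G.q3
  rw [h, G.q2] at h3
  exact K.f2QS_ne _ (K.p_mem_QS G.m1) h3.symm

lemma ne32 : G.x3 ≠ G.x2 := by
  intro h
  have h3 := G.q3
  rw [h] at h3
  exact K.fQS_ne _ (K.p_mem_QS G.m2) h3.symm

lemma FS_eq : K.FS = {0, G.x1, G.x2, G.x3} := by
  have : NeZero (2*n) := K.nz
  refine (Set.eq_of_subset_of_ncard_le ?_ ?_ (Set.toFinite _)).symm
  · rintro z (rfl | rfl | rfl | rfl)
    · exact K.zero_mem_FS
    · exact G.m1
    · exact G.m2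
    · exact G.m3
  · rw [K.FS_ncard]
    rw [Set.ncard_insert_of_notMem (by simp [(K.ne10 G).symm, (K.ne20 G).symm, (K.ne30 G).symm]),
      Set.ncard_insert_of_notMem (by simp [(K.ne21 G).symm, (K.ne31 G).symm]),
      Set.ncard_insert_of_notMem (by simp [(K.ne32 G).symm]), Set.ncard_singleton]

lemma g1 : G.x1 = ((K.d 0 + K.d G.x1 + 2 : ℕ) : ZMod (2*n)) := by
  have h := G.q1
  rw [K.fp K.zero_mem_FS] at h
  simp only [p, el, er] at h
  push_cast
  linear_combination h

lemma g2 : G.x2 = G.x1 + ((K.d G.x1 + K.d G.x2 + 2 : ℕ) : ZMod (2*n)) := by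
  have h := G.q2
  rw [K.fp G.m1] at h
  simp only [p, el, er] at h
  push_cast
  linear_combination h

lemma g3 : G.x3 = G.x2 + ((K.d G.x2 + K.d G.x3 + 2 : ℕ) : ZMod (2*n)) := by
  have h := G.q3
  rw [K.fp G.m2] at h
  simp only [p, el, er] at h
  push_cast
  linear_combination h

lemma g4 : (0 : ZMod (2*n)) = G.x3 + ((K.d G.x3 + K.d 0 + 2 : ℕ) : ZMod (2*n)) := by
  have h := K.q4 G
  rw [K.fp G.m3] at h
  simp only [p, el, er] at h
  push_cast
  linear_combination -h

def Nest (x : ZMod (2*n)) : Set (ZMod (2*n)) :=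
  el x '' (Set.Iio (K.d x)) ∪ er x '' (Set.Iio (K.d x))

lemma nest_sub {x : ZMod (2*n)} (hx : x ∈ K.FS) : K.Nest x ⊆ K.TS := K.nest_sub_TS hx

lemma nest_card {x : ZMod (2*n)} (hx : x ∈ K.FS) : (K.Nest x).ncard = 2 * K.d x :=
  K.nest_ncard hx

lemma nest_disj {x y : ZMod (2*n)} (hx : x ∈ K.FS) (hy : y ∈ K.FS) (hxy : x ≠ y) :
    Disjoint (K.Nest x) (K.Nest y) := by
  rw [Set.disjoint_left]
  rintro z (⟨k, hk, rfl⟩ | ⟨k, hk, rfl⟩) (⟨k', hk', h⟩ | ⟨k', hk', h⟩)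
  · exact hxy (K.cross_el_el' hx hy hk hk' h.symm)
  · exact K.cross_el_er hx hy hk hk' h.symm
  · exact K.cross_el_er hy hx hk' hk h
  · exact hxy (K.cross_er_er hx hy hk hk' h.symm)

lemma nests_disj :
    (K.Nest 0 ∪ K.Nest G.x1 ∪ K.Nest G.x2).ncard
      = 2 * K.d 0 + 2 * K.d G.x1 + 2 * K.d G.x2 := by
  have : NeZero (2*n) := K.nz
  have h01 := K.nest_disj K.zero_mem_FS G.m1 (K.ne10 G).symm
  have h02 := K.nest_disj K.zero_mem_FS G.m2 (K.ne20 G).symm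
  have h12 := K.nest_disj G.m1 G.m2 (K.ne21 G).symm
  rw [Set.ncard_union_eq (by rw [Set.disjoint_union_left]; exact ⟨h02, h12⟩)
    (Set.toFinite _) (Set.toFinite _),
    Set.ncard_union_eq h01 (Set.toFinite _) (Set.toFinite _),
    K.nest_card K.zero_mem_FS, K.nest_card G.m1, K.nest_card G.m2]

lemma nests_ncard :
    (K.Nest 0 ∪ K.Nest G.x1 ∪ K.Nest G.x2 ∪ K.Nest G.x3).ncard
      = 2 * (K.d 0 + K.d G.x1 + K.d G.x2 + K.d G.x3) := by
  have : NeZero (2*n) := K.nz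
  have h03 := K.nest_disj K.zero_mem_FS G.m3 (K.ne30 G).symm
  have h13 := K.nest_disj G.m1 G.m3 (K.ne31 G).symm
  have h23 := K.nest_disj G.m2 G.m3 (K.ne32 G).symm
  have hd : Disjoint (K.Nest 0 ∪ K.Nest G.x1 ∪ K.Nest G.x2) (K.Nest G.x3) := by
    rw [Set.disjoint_union_left, Set.disjoint_union_left]
    exact ⟨⟨h03, h13⟩, h23⟩
  rw [Set.ncard_union_eq hd (Set.toFinite _) (Set.toFinite _),
    K.nests_disj G, K.nest_card G.m3]
  ring

lemma nests_sub : K.Nest 0 ∪ K.Nest G.x1 ∪ K.Nest G.x2 ∪ K.Nest G.x3 ⊆ K.TS := by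
  refine Set.union_subset (Set.union_subset (Set.union_subset ?_ ?_) ?_) ?_
  · exact K.nest_sub K.zero_mem_FS
  · exact K.nest_sub G.m1
  · exact K.nest_sub G.m2
  · exact K.nest_sub G.m3

lemma sum_le : K.d 0 + K.d G.x1 + K.d G.x2 + K.d G.x3 ≤ n - 4 := by
  have : NeZero (2*n) := K.nz
  have h := Set.ncard_le_ncard (K.nests_sub G) (Set.toFinite _)
  rw [K.nests_ncard G, K.hT'] at h
  have := K.hn
  omega

lemma R_eq : (K.d 0 + K.d G.x1 + 2) + (K.d G.x1 + K.d G.x2 + 2)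
    + (K.d G.x2 + K.d G.x3 + 2) + (K.d G.x3 + K.d 0 + 2) = 2*n := by
  have : NeZero (2*n) := K.nz
  have hc : (((K.d 0 + K.d G.x1 + 2) + (K.d G.x1 + K.d G.x2 + 2)
      + (K.d G.x2 + K.d G.x3 + 2) + (K.d G.x3 + K.d 0 + 2) : ℕ) : ZMod (2*n)) = 0 := by
    push_cast
    have e1 := K.g1 G; have e2 := K.g2 G; have e3 := K.g3 G; have e4 := K.g4 G
    push_cast at e1 e2 e3 e4
    linear_combination -e1 - e2 - e3 - e4
  have hdvd := castDvd hc
  have hle := K.sum_le G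
  have hn := K.hn
  have hR : 0 < (K.d 0 + K.d G.x1 + 2) + (K.d G.x1 + K.d G.x2 + 2)
      + (K.d G.x2 + K.d G.x3 + 2) + (K.d G.x3 + K.d 0 + 2) := by omega
  have := Nat.le_of_dvd hR hdvd
  omega

lemma sum_eq : K.d 0 + K.d G.x1 + K.d G.x2 + K.d G.x3 = n - 4 := by
  have := K.R_eq G
  have := K.hn
  omega

lemma TS_eq : K.TS = K.Nest 0 ∪ K.Nest G.x1 ∪ K.Nest G.x2 ∪ K.Nest G.x3 := by
  have : NeZero (2*n) := K.nz
  refine (Set.eq_of_subset_of_ncard_le (K.nests_sub G) ?_ (Set.toFinite _)).symm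
  rw [K.nests_ncard G, K.hT', K.sum_eq G]
  have := K.hn
  omega

lemma QS_eq : K.QS = {K.p 0, K.p G.x1, K.p G.x2, K.p G.x3} := by
  rw [← K.p_image, K.FS_eq G]
  simp [Set.image_insert_eq]

/-! ### Shift by n -/

lemma two_n_zero : ((n : ZMod (2*n))) + (n : ZMod (2*n)) = 0 := by
  have h : ((2*n : ℕ) : ZMod (2*n)) = 0 := ZMod.natCast_self _
  push_cast at h
  linear_combination h

lemma nn0 (hn : 4 ≤ n) : (n : ZMod (2*n)) ≠ 0 := by
  have : NeZero (2*n) := ⟨by omega⟩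
  intro h
  exact no_dvd (m := 2*n) (a := n) (by omega) (by omega) (castDvd h)

variable {K} in
lemma shift_FS (hD : ∀ z : ZMod (2*n), K.f (z + (n : ZMod (2*n))) = K.f z + (n : ZMod (2*n)))
    {z : ZMod (2*n)} (hz : z ∈ K.FS) : z + (n : ZMod (2*n)) ∈ K.FS := by
  show K.f _ = _
  rw [hD z]
  have hz' : K.f z = z := hz
  rw [hz']

variable {K} in
lemma shift_TS (hD : ∀ z : ZMod (2*n), K.f (z + (n : ZMod (2*n))) = K.f z + (n : ZMod (2*n)))
    {z : ZMod (2*n)} (hz : z ∈ K.TS) : z + (n : ZMod (2*n)) ∈ K.TS := by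
  constructor
  · rw [hD z]
    intro h
    exact hz.1 (by exact add_right_cancel h)
  · rw [K.mem_QS_iff]
    rw [hD, hD, K.h2 z hz.2]
    exact fun h => h rfl

variable {K} in
lemma shift_not_TS (hD : ∀ z : ZMod (2*n), K.f (z + (n : ZMod (2*n))) = K.f z + (n : ZMod (2*n)))
    {z : ZMod (2*n)} (hz : z ∉ K.TS) : z + (n : ZMod (2*n)) ∉ K.TS := by
  intro h
  have h2 := shift_TS hD h
  rw [add_assoc, two_n_zero, add_zero] at h2
  exact hz h2

lemma shift_el (x : ZMod (2*n)) (k : ℕ) :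
    el (x + (n : ZMod (2*n))) k = el x k + (n : ZMod (2*n)) := by
  simp only [el]; ring

lemma shift_er (x : ZMod (2*n)) (k : ℕ) :
    er (x + (n : ZMod (2*n))) k = er x k + (n : ZMod (2*n)) := by
  simp only [er]; ring

variable {K} in
lemma shift_d (hD : ∀ z : ZMod (2*n), K.f (z + (n : ZMod (2*n))) = K.f z + (n : ZMod (2*n)))
    (x : ZMod (2*n)) : K.d (x + (n : ZMod (2*n))) = K.d x := by
  refine le_antisymm (K.d_le ?_) (K.le_d ?_)
  · rw [shift_el]
    exact shift_not_TS hD (K.el_d_not_TS x)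
  · intro j hj
    rw [shift_el]
    exact shift_TS hD (K.el_mem_TS hj)

variable {K} in
lemma shift_p (hD : ∀ z : ZMod (2*n), K.f (z + (n : ZMod (2*n))) = K.f z + (n : ZMod (2*n)))
    (x : ZMod (2*n)) : K.p (x + (n : ZMod (2*n))) = K.p x + (n : ZMod (2*n)) := by
  simp only [p, shift_d hD, shift_el]

theorem symm_of_shift (G : K.Geom)
    (hD : ∀ z : ZMod (2*n), K.f (z + (n : ZMod (2*n))) = K.f z + (n : ZMod (2*n))) :
    Even n ∧ K.FS = {0, ((n/2 : ℕ) : ZMod (2*n)), (n : ZMod (2*n)),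
      ((n + n/2 : ℕ) : ZMod (2*n))} := by
  have : NeZero (2*n) := K.nz
  have hn := K.hn
  have hmem : (n : ZMod (2*n)) ∈ K.FS := by
    have := shift_FS hD K.zero_mem_FS
    rwa [zero_add] at this
  have hp0 : K.p (0 + (n : ZMod (2*n))) = K.p 0 + (n : ZMod (2*n)) := shift_p hD 0
  rw [zero_add] at hp0
  have hx2 : G.x2 = (n : ZMod (2*n)) := by
    rw [K.FS_eq G] at hmem
    rcases hmem with h | h | h | h
    · exact absurd h (nn0 K.hn)
    · exfalso
      have h1 : K.p G.x1 = K.p 0 + (n : ZMod (2*n)) := by rw [← h]; exact hp0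
      have h2 : K.p G.x2 = K.p 0 := by
        rw [G.q2, h1, hD, ← G.q1, h1, add_assoc, two_n_zero, add_zero]
      exact K.ne20 G (K.p_inj G.m2 K.zero_mem_FS h2)
    · exact h.symm
    · exfalso
      have h1 : K.p G.x3 = K.p 0 + (n : ZMod (2*n)) := by rw [← h]; exact hp0
      have h2 : K.p 0 = K.p G.x1 + (n : ZMod (2*n)) := by
        rw [← K.q4 G, h1, hD, ← G.q1]
      have h3 : K.p G.x1 = K.p G.x3 := by
        rw [h1, h2, add_assoc, two_n_zero, add_zero]
      exact K.ne31 G (K.p_inj G.m1 G.m3 h3).symm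
  have hnn : (n : ZMod (2*n)) = 0 + (n : ZMod (2*n)) := (zero_add _).symm
  have hd2 : K.d G.x2 = K.d 0 := by
    rw [hx2, hnn, shift_d hD]
  have hp2 : K.p G.x2 = K.p 0 + (n : ZMod (2*n)) := by
    rw [hx2, hnn, shift_p hD, zero_add]
  have hx3 : G.x3 = G.x1 + (n : ZMod (2*n)) := by
    have h1 : K.p G.x3 = K.p (G.x1 + (n : ZMod (2*n))) := by
      rw [G.q3, hp2, hD, ← G.q1, ← shift_p hD]
    exact K.p_inj G.m3 (shift_FS hD G.m1) h1
  have hd3 : K.d G.x3 = K.d G.x1 := by rw [hx3, shift_d hD]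
  have hR := K.R_eq G
  rw [hd2, hd3] at hR
  have heven : Even n := ⟨K.d 0 + K.d G.x1 + 2, by omega⟩
  have hhalf : n / 2 = K.d 0 + K.d G.x1 + 2 := by omega
  refine ⟨heven, ?_⟩
  rw [K.FS_eq G]
  have e1 : G.x1 = ((n/2 : ℕ) : ZMod (2*n)) := by rw [K.g1 G, hhalf]
  have e3 : G.x3 = ((n + n/2 : ℕ) : ZMod (2*n)) := by
    rw [hx3, e1]; push_cast; ring
  rw [e1, hx2, e3]

/-- Consequences of the symmetry condition: the geometric data is n-shift symmetric. -/
theorem symm_struct (G : K.Geom) (hsym : Even n ∧ K.FS = {0, ((n/2 : ℕ) : ZMod (2*n)),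
      (n : ZMod (2*n)), ((n + n/2 : ℕ) : ZMod (2*n))}) :
    G.x2 = 0 + (n : ZMod (2*n)) ∧ G.x3 = G.x1 + (n : ZMod (2*n))
      ∧ K.d G.x2 = K.d 0 ∧ K.d G.x3 = K.d G.x1 := by
  have : NeZero (2*n) := K.nz
  have hn := K.hn
  obtain ⟨⟨t, ht⟩, hFS⟩ := hsym
  have hhalf : n / 2 = t := by omega
  have hR := K.R_eq G
  have e1 := K.g1 G
  have e2' := K.g2 G
  have e3' := K.g3 G
  have e2 : G.x2 = (((K.d 0 + K.d G.x1 + 2) + (K.d G.x1 + K.d G.x2 + 2) : ℕ)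
      : ZMod (2*n)) := by
    push_cast at e1 e2' ⊢
    linear_combination e2' + e1
  have e3 : G.x3 = (((K.d 0 + K.d G.x1 + 2) + (K.d G.x1 + K.d G.x2 + 2)
      + (K.d G.x2 + K.d G.x3 + 2) : ℕ) : ZMod (2*n)) := by
    push_cast at e2 e3' ⊢
    linear_combination e3' + e2
  have hv : ∀ s : ℕ, 0 < s → s < 2*n → ((s : ℕ) : ZMod (2*n)) ∈ K.FS →
      s = t ∨ s = n ∨ s = n + t := by
    intro s hs0 hs2 hmem
    rw [hFS] at hmem
    rcases hmem with h | h | h | h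
    · exact absurd (castDvd h) (fun hd => no_dvd hs0 hs2 hd)
    · exact Or.inl (castInj hs2 (by omega) (by rwa [hhalf] at h))
    · exact Or.inr (Or.inl (castInj hs2 (by omega) h))
    · exact Or.inr (Or.inr (castInj hs2 (by omega) (by rwa [hhalf] at h)))
  have hs1 := hv (K.d 0 + K.d G.x1 + 2) (by omega) (by omega)
    (by rw [← e1]; exact G.m1)
  have hs2 := hv ((K.d 0 + K.d G.x1 + 2) + (K.d G.x1 + K.d G.x2 + 2)) (by omega)
    (by omega) (by rw [← e2]; exact G.m2)
  have hs3 := hv ((K.d 0 + K.d G.x1 + 2) + (K.d G.x1 + K.d G.x2 + 2)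
    + (K.d G.x2 + K.d G.x3 + 2)) (by omega) (by omega) (by rw [← e3]; exact G.m3)
  have hd20 : K.d G.x2 = K.d 0 := by omega
  have hd31 : K.d G.x3 = K.d G.x1 := by omega
  refine ⟨?_, ?_, hd20, hd31⟩
  · have key : (((K.d 0 + K.d G.x1 + 2) + (K.d G.x1 + K.d G.x2 + 2) : ℕ)
        : ZMod (2*n)) = 0 + (n : ZMod (2*n)) := by
      have hs : (K.d 0 + K.d G.x1 + 2) + (K.d G.x1 + K.d G.x2 + 2) = n := by omega
      rw [hs]; push_cast; ring
    linear_combination e2 + key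
  · have key : (((K.d 0 + K.d G.x1 + 2) + (K.d G.x1 + K.d G.x2 + 2)
        + (K.d G.x2 + K.d G.x3 + 2) : ℕ) : ZMod (2*n))
        = ((K.d 0 + K.d G.x1 + 2 : ℕ) : ZMod (2*n)) + (n : ZMod (2*n)) := by
      have hs : (K.d 0 + K.d G.x1 + 2) + (K.d G.x1 + K.d G.x2 + 2)
          + (K.d G.x2 + K.d G.x3 + 2) = n + (K.d 0 + K.d G.x1 + 2) := by omega
      rw [hs]; push_cast; ring
    linear_combination e3 + key - e1

variable {K} in
/-- If `x` and `x' = x + n` are fixed points with equal depth, then the shift relation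
holds on the whole nest of `x`, at `p x`, and at `x`. -/
lemma pair_shift {x x' : ZMod (2*n)} (hx : x ∈ K.FS) (hx' : x' ∈ K.FS)
    (he : x' = x + (n : ZMod (2*n))) (hd : K.d x' = K.d x) :
    (∀ k < K.d x, K.f (el x k + (n : ZMod (2*n))) = K.f (el x k) + (n : ZMod (2*n))
      ∧ K.f (er x k + (n : ZMod (2*n))) = K.f (er x k) + (n : ZMod (2*n)))
    ∧ K.f (K.p x + (n : ZMod (2*n))) = K.f (K.p x) + (n : ZMod (2*n))
    ∧ K.f (x + (n : ZMod (2*n))) = K.f x + (n : ZMod (2*n)) := by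
  have hfx' : K.f x' = x' := hx'
  have hfx : K.f x = x := hx
  refine ⟨fun k hk => ⟨?_, ?_⟩, ?_, ?_⟩
  · have h1 : el x k + (n : ZMod (2*n)) = el x' k := by rw [he, shift_el]
    rw [h1, K.walk hx' k (by rw [hd]; omega), K.walk hx k (by omega), he, shift_er]
  · have h1 : er x k + (n : ZMod (2*n)) = er x' k := by rw [he, shift_er]
    rw [h1, K.walk2 hx' (by rw [hd]; exact hk), K.walk2 hx hk, he, shift_el]
  · have h1 : K.p x + (n : ZMod (2*n)) = K.p x' := by
      simp only [p]
      rw [hd, he, shift_el]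
    rw [h1, K.fp hx', K.fp hx, hd, he, shift_er]
  · rw [← he, hfx', hfx, he]

theorem shift_of_symm (G : K.Geom) (hsym : Even n ∧ K.FS = {0, ((n/2 : ℕ) : ZMod (2*n)),
      (n : ZMod (2*n)), ((n + n/2 : ℕ) : ZMod (2*n))}) :
    ∀ z : ZMod (2*n), K.f (z + (n : ZMod (2*n))) = K.f z + (n : ZMod (2*n)) := by
  have : NeZero (2*n) := K.nz
  obtain ⟨h02, h13, d20, d31⟩ := K.symm_struct G hsym
  have h20 : (0 : ZMod (2*n)) = G.x2 + (n : ZMod (2*n)) := by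
    rw [h02, zero_add, two_n_zero]
  have h31 : G.x1 = G.x3 + (n : ZMod (2*n)) := by
    rw [h13, add_assoc, two_n_zero, add_zero]
  have P0 := pair_shift K.zero_mem_FS G.m2 h02 d20
  have P1 := pair_shift G.m1 G.m3 h13 d31
  have P2 := pair_shift G.m2 K.zero_mem_FS h20 d20.symm
  have P3 := pair_shift G.m3 G.m1 h31 d31.symm
  intro z
  rcases K.trichotomy z with hz | hz | hz
  · rw [K.FS_eq G] at hz
    rcases hz with rfl | rfl | rfl | rfl
    · exact P0.2.2
    · exact P1.2.2
    · exact P2.2.2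
    · exact P3.2.2
  · rw [K.TS_eq G] at hz
    rcases hz with ((hz | hz) | hz) | hz <;>
      rcases hz with ⟨k, hk, rfl⟩ | ⟨k, hk, rfl⟩
    · exact (P0.1 k hk).1
    · exact (P0.1 k hk).2
    · exact (P1.1 k hk).1
    · exact (P1.1 k hk).2
    · exact (P2.1 k hk).1
    · exact (P2.1 k hk).2
    · exact (P3.1 k hk).1
    · exact (P3.1 k hk).2
  · rw [K.QS_eq G] at hz
    rcases hz with rfl | rfl | rfl | rfl
    · exact P0.2.1
    · exact P1.2.1
    · exact P2.2.1
    · exact P3.2.1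

theorem qshift_of_symm (G : K.Geom) (hsym : Even n ∧ K.FS = {0, ((n/2 : ℕ) : ZMod (2*n)),
      (n : ZMod (2*n)), ((n + n/2 : ℕ) : ZMod (2*n))}) :
    ∀ z ∈ K.QS, K.f (K.f z) = z + (n : ZMod (2*n)) := by
  have : NeZero (2*n) := K.nz
  obtain ⟨h02, h13, d20, d31⟩ := K.symm_struct G hsym
  have hp2 : K.p G.x2 = K.p 0 + (n : ZMod (2*n)) := by
    simp only [p]
    rw [d20, h02, shift_el]
  have hp3 : K.p G.x3 = K.p G.x1 + (n : ZMod (2*n)) := by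
    simp only [p]
    rw [d31, h13, shift_el]
  intro z hz
  rw [K.QS_eq G] at hz
  rcases hz with rfl | rfl | rfl | rfl
  · rw [← G.q1, ← G.q2, hp2]
  · rw [← G.q2, ← G.q3, hp3]
  · rw [← G.q3, K.q4 G, hp2, add_assoc, two_n_zero, add_zero]
  · rw [K.q4 G, ← G.q1, hp3, add_assoc, two_n_zero, add_zero]

end Core

/-! ### Upstairs: permutations of ℕ -/

open Equiv

lemma supp_symm {g : Equiv.Perm ℕ} {x : ℕ} (h : g x = x) : g⁻¹ x = x := by
  conv_lhs => rw [← h]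
  simp

lemma supp_maps {g : Equiv.Perm ℕ} {s : Set ℕ} (h : {x | g x ≠ x} ⊆ s) {x : ℕ}
    (hx : x ∈ s) : g x ∈ s := by
  by_cases he : g x = x
  · rwa [he]
  · exact h (fun hc => he (g.injective hc))

lemma supp_out {g : Equiv.Perm ℕ} {s : Set ℕ} (h : {x | g x ≠ x} ⊆ s) {x : ℕ}
    (hx : x ∉ s) : g x = x := by
  by_contra hc
  exact hx (h hc)

lemma supp_pow {g : Equiv.Perm ℕ} {x : ℕ} (h : g x = x) (k : ℕ) : (g ^ k) x = x := by
  induction k with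
  | zero => simp
  | succ k ih => rw [pow_succ, Equiv.Perm.mul_apply, h, ih]

lemma supp_pow_subset {g : Equiv.Perm ℕ} (k : ℕ) :
    {x | (g ^ k) x ≠ x} ⊆ {x | g x ≠ x} := by
  intro x hx
  by_contra hc
  simp only [Set.mem_setOf_eq, not_not] at hc
  exact hx (supp_pow hc k)

lemma supp_inv {g : Equiv.Perm ℕ} : {x | g⁻¹ x ≠ x} = {x | g x ≠ x} := by
  ext x
  simp only [Set.mem_setOf_eq]
  constructor
  · intro h
    by_contra hc
    exact h (supp_symm hc)
  · intro h
    intro hc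
    apply h
    conv_lhs => rw [← hc]
    simp

lemma Icc_iff_of_supp {g : Equiv.Perm ℕ} {s : Set ℕ} (hs : {y | g y ≠ y} ⊆ s) (y : ℕ) :
    g y ∈ s ↔ y ∈ s := by
  constructor
  · intro h
    by_contra hy
    rw [supp_out hs hy] at h
    exact hy h
  · exact supp_maps hs

/-- Everything we extract from the hypotheses of the theorem. -/
structure Setup (n : ℕ) where
  σ0 : Equiv.Perm ℕ
  σi : Equiv.Perm ℕ
  σ1 : Equiv.Perm ℕ
  τ : Equiv.Perm ℕ
  hn : 4 ≤ n
  prod : σ0 * σi * σ1 * τ = 1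
  s0inv : σ0 * σ0 = 1
  s0supp : {x | σ0 x ≠ x} = Set.Icc 1 (2*n)
  cisupp : {x | σi x ≠ x} = Set.Icc 1 (2*n)
  s1inv : σ1 * σ1 = 1
  s1supp : {x | σ1 x ≠ x} ⊆ Set.Icc 1 (2*n)
  cyc : σi.IsCycle
  s1card : {x | σ1 x ≠ x}.ncard = 2*(n-2)
  ci1 : σi 1 = 2*n
  cij : ∀ j, 2 ≤ j → j ≤ 2*n → σi j = j - 1
  s1N : σ1 (2*n) = 2*n
  τN : τ (2*n) = 2*n
  a0 : ℕ
  b0 : ℕ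
  hab0 : a0 ≠ b0
  ha0 : a0 ∈ Set.Icc 1 (2*n)
  hb0 : b0 ∈ Set.Icc 1 (2*n)
  hτ : τ = Equiv.swap a0 b0
  a : ℕ
  b : ℕ
  c : ℕ
  e : ℕ
  π : Equiv.Perm ℕ
  hab : a ≠ b
  hac : a ≠ c
  hae : a ≠ e
  hbc : b ≠ c
  hbe : b ≠ e
  hce : c ≠ e
  hπ2 : π * π = 1
  hπQ : ∀ x, π x ≠ x → x ∉ ({a, b, c, e} : Set ℕ)
  hπcard : {x | π x ≠ x}.ncard = 2*(n-4)
  hρ : σ1 * τ = π * (Equiv.swap a b * Equiv.swap b c * Equiv.swap c e)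

namespace Setup

variable {n : ℕ} (S : Setup n)

def ρ : Equiv.Perm ℕ := S.σ1 * S.τ

lemma hτinv : S.τ * S.τ = 1 := by
  rw [S.hτ]
  exact Equiv.swap_mul_self _ _

lemma τsupp : {x | S.τ x ≠ x} ⊆ Set.Icc 1 (2*n) := by
  intro x hx
  simp only [Set.mem_setOf_eq, S.hτ] at hx
  by_cases h1 : x = S.a0
  · exact h1 ▸ S.ha0
  by_cases h2 : x = S.b0
  · exact h2 ▸ S.hb0
  · exact absurd (Equiv.swap_apply_of_ne_of_ne h1 h2) hx

lemma ρsupp : {x | S.ρ x ≠ x} ⊆ Set.Icc 1 (2*n) := by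
  intro x hx
  simp only [Set.mem_setOf_eq, ρ, Equiv.Perm.mul_apply] at hx
  by_cases ht : S.τ x = x
  · rw [ht] at hx
    exact S.s1supp hx
  · exact S.τsupp ht

lemma ρN : S.ρ (2*n) = 2*n := by
  simp only [ρ, Equiv.Perm.mul_apply, S.τN, S.s1N]

lemma ci_out {x : ℕ} (hx : x ∉ Set.Icc 1 (2*n)) : S.σi x = x := by
  by_contra hc
  exact hx (S.cisupp ▸ hc)

/-- The orbit formula for σi. -/
lemma ci_pow (j : ℕ) (hj : j ≤ 2*n - 1) : (S.σi ^ j) (2*n) = 2*n - j := by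
  have hn := S.hn
  induction j with
  | zero => simp
  | succ j ih =>
    rw [pow_succ', Equiv.Perm.mul_apply, ih (by omega), S.cij (2*n - j) (by omega) (by omega)]
    omega

lemma ci_pow_2n : S.σi ^ (2*n) = 1 := by
  have hn := S.hn
  have h2n : (S.σi ^ (2*n)) (2*n) = 2*n := by
    have hsplit : S.σi ^ (2*n) = S.σi * S.σi ^ (2*n - 1) := by
      rw [← pow_succ']
      congr 1
      omega
    rw [hsplit, Equiv.Perm.mul_apply, S.ci_pow (2*n - 1) le_rfl,
      show 2*n - (2*n - 1) = 1 by omega, S.ci1]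
  ext x
  simp only [Equiv.Perm.one_apply]
  by_cases hx : x ∈ Set.Icc 1 (2*n)
  · have hor : x = (S.σi ^ (2*n - x)) (2*n) := by
      rw [S.ci_pow (2*n - x) (by simp at hx; omega)]
      simp at hx
      omega
    rw [hor, ← Equiv.Perm.mul_apply, ← pow_add, add_comm, pow_add, Equiv.Perm.mul_apply,
      h2n]
  · exact supp_pow (S.ci_out hx) _

lemma gen_fix_lt {j x : ℕ} (hj : j < 2*n) (hx : x ∈ Set.Icc 1 (2*n))
    (h : (S.σi ^ j) x = x) : j = 0 := by
  have hn := S.hn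
  have hor : x = (S.σi ^ (2*n - x)) (2*n) := by
    rw [S.ci_pow (2*n - x) (by simp at hx; omega)]
    simp at hx
    omega
  rw [hor, ← Equiv.Perm.mul_apply, ← pow_add, add_comm, pow_add, Equiv.Perm.mul_apply] at h
  have h2n : (S.σi ^ j) (2*n) = 2*n := (Equiv.injective _ h)
  rw [S.ci_pow j (by omega)] at h2n
  omega

lemma pow_fix_out {j x : ℕ} (hx : x ∉ Set.Icc 1 (2*n)) : (S.σi ^ j) x = x :=
  supp_pow (S.ci_out hx) _

lemma ci_maps {x : ℕ} (hx : x ∈ Set.Icc 1 (2*n)) : S.σi x ∈ Set.Icc 1 (2*n) :=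
  supp_maps (le_of_eq S.cisupp) hx

lemma pow_maps {j : ℕ} {x : ℕ} (hx : x ∈ Set.Icc 1 (2*n)) :
    (S.σi ^ j) x ∈ Set.Icc 1 (2*n) :=
  supp_maps (le_trans (supp_pow_subset j) (le_of_eq S.cisupp)) hx

/-- A permutation commuting with σi and supported on the interval is a power of σi. -/
lemma cent {γ : Equiv.Perm ℕ} (hc : γ * S.σi = S.σi * γ)
    (hs : {x | γ x ≠ x} ⊆ Set.Icc 1 (2*n)) :
    γ = S.σi ^ (2*n - γ (2*n)) := by
  have hn := S.hn
  have hco : Commute γ S.σi := hc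
  have hγN : γ (2*n) ∈ Set.Icc 1 (2*n) := supp_maps hs (by simp; omega)
  simp only [Set.mem_Icc] at hγN
  have hk : (S.σi ^ (2*n - γ (2*n))) (2*n) = γ (2*n) := by
    rw [S.ci_pow _ (by omega)]
    omega
  ext x
  by_cases hx : x ∈ Set.Icc 1 (2*n)
  · have hor : x = (S.σi ^ (2*n - x)) (2*n) := by
      rw [S.ci_pow (2*n - x) (by simp at hx; omega)]
      simp at hx
      omega
    have step : γ ((S.σi ^ (2*n - x)) (2*n)) = (S.σi ^ (2*n - x)) (γ (2*n)) := by
      rw [← Equiv.Perm.mul_apply, (hco.pow_right (2*n - x)).eq, Equiv.Perm.mul_apply]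
    generalize hg : 2*n - γ (2*n) = k at hk ⊢
    rw [hor, step, ← hk, ← Equiv.Perm.mul_apply, ← Equiv.Perm.mul_apply, ← pow_add,
      ← pow_add, add_comm]
  · rw [supp_out hs hx, pow_fix_out S hx]

end Setup

/-! ### up/down between ℕ and ZMod -/

def up {m : ℕ} (z : ZMod m) : ℕ := if z = 0 then m else z.val

lemma up_mem {m : ℕ} [NeZero m] (z : ZMod m) : up z ∈ Set.Icc 1 m := by
  have hm : 0 < m := Nat.pos_of_ne_zero (NeZero.ne m)
  rw [up]
  split_ifs with h
  · simp; omega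
  · have h1 : z.val ≠ 0 := fun hc => h (by rwa [ZMod.val_eq_zero] at hc)
    have h2 : z.val < m := ZMod.val_lt z
    simp
    omega

lemma down_up {m : ℕ} [NeZero m] (z : ZMod m) : ((up z : ℕ) : ZMod m) = z := by
  rw [up]
  split_ifs with h
  · rw [ZMod.natCast_self, h]
  · exact Core.valCast z

lemma up_down {m : ℕ} [NeZero m] {x : ℕ} (hx : x ∈ Set.Icc 1 m) :
    up ((x : ℕ) : ZMod m) = x := by
  simp only [Set.mem_Icc] at hx
  rw [up]
  split_ifs with h
  · have := Core.castDvd h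
    have := Nat.le_of_dvd (by omega) this
    omega
  · have hlt : x < m := by
      rcases Nat.lt_or_ge x m with h1 | h1
      · exact h1
      · exfalso
        have : x = m := by omega
        rw [this] at h
        exact h (ZMod.natCast_self _)
    exact ZMod.val_cast_of_lt hlt

lemma down_inj {m : ℕ} [NeZero m] {x y : ℕ} (hx : x ∈ Set.Icc 1 m)
    (hy : y ∈ Set.Icc 1 m) (h : ((x : ℕ) : ZMod m) = y) : x = y := by
  have := congrArg (up (m := m)) h
  rwa [up_down hx, up_down hy] at this

lemma sub_n_eq_add {n : ℕ} (w : ZMod (2*n)) : w - (n : ZMod (2*n)) = w + (n : ZMod (2*n)) := by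
  have h := Core.two_n_zero (n := n)
  linear_combination -h

namespace Setup

lemma nz {n : ℕ} (S : Setup n) : NeZero (2*n) := ⟨by have := S.hn; omega⟩

variable {n : ℕ} (S : Setup n)

lemma ρ_maps {x : ℕ} (hx : x ∈ Set.Icc 1 (2*n)) : S.ρ x ∈ Set.Icc 1 (2*n) :=
  supp_maps S.ρsupp hx

def f (z : ZMod (2*n)) : ZMod (2*n) := ((S.ρ (up z) : ℕ) : ZMod (2*n))

lemma f_down {x : ℕ} (hx : x ∈ Set.Icc 1 (2*n)) :
    S.f ((x : ℕ) : ZMod (2*n)) = ((S.ρ x : ℕ) : ZMod (2*n)) := by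
  have : NeZero (2*n) := S.nz
  rw [f, up_down hx]

def Qset : Set ℕ := {S.a, S.b, S.c, S.e}

lemma πfix {x : ℕ} (hx : x ∈ S.Qset) : S.π x = x := by
  by_contra h
  exact S.hπQ x h hx

lemma ππ (x : ℕ) : S.π (S.π x) = x := by
  have := Equiv.Perm.ext_iff.mp S.hπ2 x
  simpa using this

lemma ρ_eval (x : ℕ) :
    S.ρ x = S.π ((Equiv.swap S.a S.b) ((Equiv.swap S.b S.c) ((Equiv.swap S.c S.e) x))) := by
  rw [ρ, S.hρ]
  rfl

lemma ρa : S.ρ S.a = S.b := by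
  rw [S.ρ_eval, Equiv.swap_apply_of_ne_of_ne S.hac S.hae,
    Equiv.swap_apply_of_ne_of_ne S.hab S.hac, Equiv.swap_apply_left]
  exact S.πfix (by simp [Qset])

lemma ρb : S.ρ S.b = S.c := by
  rw [S.ρ_eval, Equiv.swap_apply_of_ne_of_ne S.hbc S.hbe, Equiv.swap_apply_left,
    Equiv.swap_apply_of_ne_of_ne (Ne.symm S.hac) (Ne.symm S.hbc)]
  exact S.πfix (by simp [Qset])

lemma ρc : S.ρ S.c = S.e := by
  rw [S.ρ_eval, Equiv.swap_apply_left,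
    Equiv.swap_apply_of_ne_of_ne (Ne.symm S.hbe) (Ne.symm S.hce),
    Equiv.swap_apply_of_ne_of_ne (Ne.symm S.hae) (Ne.symm S.hbe)]
  exact S.πfix (by simp [Qset])

lemma ρe : S.ρ S.e = S.a := by
  rw [S.ρ_eval, Equiv.swap_apply_right, Equiv.swap_apply_right, Equiv.swap_apply_right]
  exact S.πfix (by simp [Qset])

lemma ρ_out_Q {x : ℕ} (hx : x ∉ S.Qset) : S.ρ x = S.π x := by
  simp only [Qset, Set.mem_insert_iff, Set.mem_singleton_iff, not_or] at hx
  obtain ⟨h1, h2, h3, h4⟩ := hx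
  rw [S.ρ_eval, Equiv.swap_apply_of_ne_of_ne h3 h4, Equiv.swap_apply_of_ne_of_ne h2 h3,
    Equiv.swap_apply_of_ne_of_ne h1 h2]

lemma ρ2_out {x : ℕ} (hx : x ∉ S.Qset) : S.ρ (S.ρ x) = x := by
  rw [S.ρ_out_Q hx]
  by_cases hπ : S.π x = x
  · rw [hπ, S.ρ_out_Q hx, hπ]
  · have hπx : S.π x ∉ S.Qset := S.hπQ _ (by rw [S.ππ]; exact fun hc => hπ hc.symm)
    rw [S.ρ_out_Q hπx, S.ππ]

lemma Qset_sub : S.Qset ⊆ Set.Icc 1 (2*n) := by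
  rintro q (rfl | rfl | rfl | rfl)
  · apply S.ρsupp; rw [Set.mem_setOf_eq, S.ρa]; exact Ne.symm S.hab
  · apply S.ρsupp; rw [Set.mem_setOf_eq, S.ρb]; exact Ne.symm S.hbc
  · apply S.ρsupp; rw [Set.mem_setOf_eq, S.ρc]; exact Ne.symm S.hce
  · apply S.ρsupp; rw [Set.mem_setOf_eq, S.ρe]; exact S.hae

lemma πsupp : {x | S.π x ≠ x} ⊆ Set.Icc 1 (2*n) := by
  intro x hx
  have hQ : x ∉ S.Qset := S.hπQ x hx
  apply S.ρsupp
  rw [Set.mem_setOf_eq, S.ρ_out_Q hQ]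
  exact hx

/-- The relation upstairs. -/
lemma rel_up : ∀ x, S.ρ (S.σi (S.ρ x)) = S.σi⁻¹ x := by
  have h1 : S.σ0 * (S.σi * S.ρ) = 1 := by
    rw [ρ, ← mul_assoc, ← mul_assoc]
    exact S.prod
  have h0 : S.σ0 = (S.σi * S.ρ)⁻¹ := by
    rw [← one_mul (S.σi * S.ρ)⁻¹, ← h1, mul_assoc, mul_inv_cancel, mul_one]
  have h2 : (S.σi * S.ρ) * (S.σi * S.ρ) = 1 := by
    have h3 := S.s0inv
    rw [h0] at h3
    have := congrArg Inv.inv h3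
    simpa [mul_inv_rev] using this
  intro x
  have h4 := Equiv.Perm.ext_iff.mp h2 x
  simp only [Equiv.Perm.mul_apply, Equiv.Perm.one_apply] at h4
  apply S.σi.injective
  rw [Equiv.Perm.coe_inv, Equiv.apply_symm_apply]
  exact h4

lemma dci {x : ℕ} (hx : x ∈ Set.Icc 1 (2*n)) :
    ((S.σi x : ℕ) : ZMod (2*n)) = ((x : ℕ) : ZMod (2*n)) - 1 := by
  have hn := S.hn
  simp only [Set.mem_Icc] at hx
  rcases Nat.lt_or_ge x 2 with h1 | h1
  · have hx1 : x = 1 := by omega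
    rw [hx1, S.ci1, ZMod.natCast_self]
    norm_num
  · rw [S.cij x h1 hx.2, Nat.cast_sub (by omega)]
    norm_num

lemma dci_inv {x : ℕ} (hx : x ∈ Set.Icc 1 (2*n)) :
    ((S.σi⁻¹ x : ℕ) : ZMod (2*n)) = ((x : ℕ) : ZMod (2*n)) + 1 := by
  have hn := S.hn
  simp only [Set.mem_Icc] at hx
  rcases Nat.lt_or_ge x (2*n) with h1 | h1
  · have h2 : S.σi (x+1) = x := by
      rw [S.cij (x+1) (by omega) (by omega)]
      omega
    have h3 : S.σi⁻¹ x = x + 1 := by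
      apply S.σi.injective
      rw [Equiv.Perm.coe_inv, Equiv.apply_symm_apply, h2]
    rw [h3]
    push_cast
    ring
  · have hx2 : x = 2*n := by omega
    have h3 : S.σi⁻¹ x = 1 := by
      apply S.σi.injective
      rw [Equiv.Perm.coe_inv, Equiv.apply_symm_apply, S.ci1, hx2]
    rw [h3, hx2, ZMod.natCast_self]
    norm_num

lemma hrelK : ∀ z : ZMod (2*n), S.f (S.f z - 1) = z + 1 := by
  have : NeZero (2*n) := S.nz
  intro z
  have h1 : S.ρ (up z) ∈ Set.Icc 1 (2*n) := S.ρ_maps (up_mem z)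
  have h2 : S.f z - 1 = ((S.σi (S.ρ (up z)) : ℕ) : ZMod (2*n)) := by
    rw [S.dci h1, f]
  rw [h2, S.f_down (S.ci_maps h1), S.rel_up, S.dci_inv (up_mem z), down_up]

lemma h0K : S.f 0 = 0 := by
  have hd : ((2*n : ℕ) : ZMod (2*n)) = 0 := ZMod.natCast_self _
  rw [← hd, S.f_down (by simp; have := S.hn; omega), S.ρN, hd]

lemma dQa : S.a ∈ Set.Icc 1 (2*n) := S.Qset_sub (by simp [Qset])
lemma dQb : S.b ∈ Set.Icc 1 (2*n) := S.Qset_sub (by simp [Qset])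
lemma dQc : S.c ∈ Set.Icc 1 (2*n) := S.Qset_sub (by simp [Qset])
lemma dQe : S.e ∈ Set.Icc 1 (2*n) := S.Qset_sub (by simp [Qset])

def DQ : Set (ZMod (2*n)) := {((S.a : ℕ) : ZMod (2*n)), ((S.b : ℕ) : ZMod (2*n)),
  ((S.c : ℕ) : ZMod (2*n)), ((S.e : ℕ) : ZMod (2*n))}

lemma up_notin_Q {z : ZMod (2*n)} (hz : z ∉ S.DQ) : up z ∉ S.Qset := by
  have : NeZero (2*n) := S.nz
  rintro (h | h | h | h) <;>
  · apply hz
    have := congrArg (fun t => ((t : ℕ) : ZMod (2*n))) h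
    rw [down_up] at this
    simp [DQ, this]

lemma h2K : ∀ z : ZMod (2*n), z ∉ S.DQ → S.f (S.f z) = z := by
  have : NeZero (2*n) := S.nz
  intro z hz
  have hQ : up z ∉ S.Qset := S.up_notin_Q hz
  rw [show S.f z = ((S.ρ (up z) : ℕ) : ZMod (2*n)) from rfl,
    S.f_down (S.ρ_maps (up_mem z)), S.ρ2_out hQ, down_up]

lemma hTK : {z : ZMod (2*n) | S.f z ≠ z ∧ z ∉ S.DQ}.ncard = 2*n - 8 := by
  have : NeZero (2*n) := S.nz
  have hn := S.hn
  have himg : {z : ZMod (2*n) | S.f z ≠ z ∧ z ∉ S.DQ}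
      = (fun x : ℕ => ((x : ℕ) : ZMod (2*n))) '' {x | S.π x ≠ x} := by
    ext z
    constructor
    · rintro ⟨h1, h2⟩
      have hQ : up z ∉ S.Qset := S.up_notin_Q h2
      refine ⟨up z, ?_, down_up z⟩
      rw [Set.mem_setOf_eq, ← S.ρ_out_Q hQ]
      intro hc
      apply h1
      rw [f, hc, down_up]
    · rintro ⟨x, hx, rfl⟩
      have hxI : x ∈ Set.Icc 1 (2*n) := S.πsupp hx
      have hQ : x ∉ S.Qset := S.hπQ x hx
      constructor
      · rw [S.f_down hxI, S.ρ_out_Q hQ]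
        intro hc
        have hπI : S.π x ∈ Set.Icc 1 (2*n) := supp_maps S.πsupp hxI
        exact hx (down_inj hπI hxI hc)
      · intro hc
        simp only [DQ, Set.mem_insert_iff, Set.mem_singleton_iff] at hc
        apply hQ
        simp only [Qset, Set.mem_insert_iff, Set.mem_singleton_iff]
        rcases hc with h | h | h | h
        · exact Or.inl (down_inj hxI S.dQa h)
        · exact Or.inr (Or.inl (down_inj hxI S.dQb h))
        · exact Or.inr (Or.inr (Or.inl (down_inj hxI S.dQc h)))
        · exact Or.inr (Or.inr (Or.inr (down_inj hxI S.dQe h)))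
  rw [himg, Set.ncard_image_of_injOn (fun x hx y hy h => down_inj (S.πsupp hx)
    (S.πsupp hy) h), S.hπcard]
  omega

/-- The downstairs core structure. -/
noncomputable def toCore : Core n where
  f := S.f
  A := ((S.a : ℕ) : ZMod (2*n))
  B := ((S.b : ℕ) : ZMod (2*n))
  C := ((S.c : ℕ) : ZMod (2*n))
  E := ((S.e : ℕ) : ZMod (2*n))
  hn := S.hn
  hrel := S.hrelK
  hAB := fun h => S.hab (by have : NeZero (2*n) := S.nz; exact down_inj S.dQa S.dQb h)
  hAC := fun h => S.hac (by have : NeZero (2*n) := S.nz; exact down_inj S.dQa S.dQc h)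
  hAE := fun h => S.hae (by have : NeZero (2*n) := S.nz; exact down_inj S.dQa S.dQe h)
  hBC := fun h => S.hbc (by have : NeZero (2*n) := S.nz; exact down_inj S.dQb S.dQc h)
  hBE := fun h => S.hbe (by have : NeZero (2*n) := S.nz; exact down_inj S.dQb S.dQe h)
  hCE := fun h => S.hce (by have : NeZero (2*n) := S.nz; exact down_inj S.dQc S.dQe h)
  hfA := by rw [S.f_down S.dQa, S.ρa]
  hfB := by rw [S.f_down S.dQb, S.ρb]
  hfC := by rw [S.f_down S.dQc, S.ρc]
  hfE := by rw [S.f_down S.dQe, S.ρe]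
  h2 := S.h2K
  hT := S.hTK
  h0 := S.h0K

lemma toCore_QS : S.toCore.QS = S.DQ := rfl

/-- The upstairs fixed point set. -/
def Fρ : Set ℕ := {x | x ∈ Set.Icc 1 (2*n) ∧ S.ρ x = x}

lemma mem_FS_iff {x : ℕ} (hx : x ∈ Set.Icc 1 (2*n)) :
    ((x : ℕ) : ZMod (2*n)) ∈ S.toCore.FS ↔ S.ρ x = x := by
  have : NeZero (2*n) := S.nz
  constructor
  · intro h
    have h2 : S.f ((x : ℕ) : ZMod (2*n)) = ((x : ℕ) : ZMod (2*n)) := h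
    rw [S.f_down hx] at h2
    exact down_inj (S.ρ_maps hx) hx h2
  · intro h
    show S.f _ = _
    rw [S.f_down hx, h]

lemma Fρ_eq : S.Fρ = up '' S.toCore.FS := by
  have : NeZero (2*n) := S.nz
  ext x
  constructor
  · rintro ⟨hx, hfix⟩
    exact ⟨((x : ℕ) : ZMod (2*n)), (S.mem_FS_iff hx).mpr hfix, up_down hx⟩
  · rintro ⟨z, hz, rfl⟩
    have hI := up_mem (m := 2*n) z
    refine ⟨hI, ?_⟩
    rw [← (S.mem_FS_iff hI)]
    rwa [down_up]

lemma Fρ_ncard : S.Fρ.ncard = 4 := by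
  have : NeZero (2*n) := S.nz
  rw [S.Fρ_eq, Set.ncard_image_of_injective _ (fun z w h => by
    have := congrArg (fun t : ℕ => ((t : ℕ) : ZMod (2*n))) h
    simpa [down_up] using this), S.toCore.FS_ncard]

lemma Fρ_sub_FS {x : ℕ} (hx : x ∈ S.Fρ) : ((x : ℕ) : ZMod (2*n)) ∈ S.toCore.FS :=
  (S.mem_FS_iff hx.1).mpr hx.2

/-! ### The endpoints of τ lie on the diagonal of the 4-cycle -/

lemma στ1 : S.σ1 = S.ρ * S.τ := by
  rw [ρ, mul_assoc, S.hτinv, mul_one]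

lemma inv4 : ∀ y, S.ρ (S.τ (S.ρ (S.τ y))) = y := by
  intro y
  have h : (S.ρ * S.τ) * (S.ρ * S.τ) = 1 := by
    rw [← S.στ1]
    exact S.s1inv
  have := Equiv.Perm.ext_iff.mp h y
  simpa using this

lemma τa0 : S.τ S.a0 = S.b0 := by rw [S.hτ]; exact Equiv.swap_apply_left _ _
lemma τb0 : S.τ S.b0 = S.a0 := by rw [S.hτ]; exact Equiv.swap_apply_right _ _

lemma τ_out {x : ℕ} (h1 : x ≠ S.a0) (h2 : x ≠ S.b0) : S.τ x = x := by
  rw [S.hτ]; exact Equiv.swap_apply_of_ne_of_ne h1 h2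

lemma ρQ_ne : ∀ q ∈ S.Qset, S.ρ q ≠ q := by
  rintro q (rfl | rfl | rfl | rfl)
  · rw [S.ρa]; exact Ne.symm S.hab
  · rw [S.ρb]; exact Ne.symm S.hbc
  · rw [S.ρc]; exact Ne.symm S.hce
  · rw [S.ρe]; exact S.hae

lemma ρ2Q_ne : ∀ q ∈ S.Qset, S.ρ (S.ρ q) ≠ q := by
  rintro q (rfl | rfl | rfl | rfl)
  · rw [S.ρa, S.ρb]; exact Ne.symm S.hac
  · rw [S.ρb, S.ρc]; exact Ne.symm S.hbe
  · rw [S.ρc, S.ρe]; exact S.hac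
  · rw [S.ρe, S.ρa]; exact S.hbe

lemma ρmemQ : ∀ q ∈ S.Qset, S.ρ q ∈ S.Qset := by
  rintro q (rfl | rfl | rfl | rfl) <;>
    simp [S.ρa, S.ρb, S.ρc, S.ρe, Qset, Set.mem_insert_iff]

lemma ρ4Q : ∀ q ∈ S.Qset, S.ρ (S.ρ (S.ρ (S.ρ q))) = q := by
  rintro q (rfl | rfl | rfl | rfl) <;> simp [S.ρa, S.ρb, S.ρc, S.ρe]

lemma Qset_ncard : S.Qset.ncard = 4 := by
  rw [Qset, Set.ncard_insert_of_notMem (by simp [S.hab, S.hac, S.hae]),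
    Set.ncard_insert_of_notMem (by simp [S.hbc, S.hbe]),
    Set.ncard_insert_of_notMem (by simp [S.hce]), Set.ncard_singleton]

lemma Qab : S.Qset = {S.a0, S.b0, S.ρ.symm S.a0, S.ρ.symm S.b0} := by
  have hsub : S.Qset ⊆ {S.a0, S.b0, S.ρ.symm S.a0, S.ρ.symm S.b0} := by
    intro q hq
    by_contra hc
    simp only [Set.mem_insert_iff, Set.mem_singleton_iff, not_or] at hc
    obtain ⟨h1, h2, h3, h4⟩ := hc
    have hq1 : S.τ q = q := S.τ_out h1 h2
    have hq2 : S.τ (S.ρ q) = S.ρ q := by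
      refine S.τ_out (fun hc => ?_) (fun hc => ?_)
      · exact h3 (by rw [← hc]; exact (Equiv.symm_apply_apply _ _).symm)
      · exact h4 (by rw [← hc]; exact (Equiv.symm_apply_apply _ _).symm)
    have := S.inv4 q
    rw [hq1, hq2] at this
    exact S.ρ2Q_ne q hq this
  refine Set.eq_of_subset_of_ncard_le hsub ?_ (Set.toFinite _)
  rw [S.Qset_ncard]
  refine le_trans (Set.ncard_insert_le _ _) ?_
  refine le_trans (Nat.add_le_add_right (Set.ncard_insert_le _ _) 1) ?_
  refine le_trans (Nat.add_le_add_right (Nat.add_le_add_right (Set.ncard_insert_le _ _) 1) 1) ?_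
  simp

lemma a0Q : S.a0 ∈ S.Qset := by rw [S.Qab]; simp
lemma b0Q : S.b0 ∈ S.Qset := by rw [S.Qab]; simp

lemma Qorbit : ∀ q ∈ S.Qset, S.Qset = {q, S.ρ q, S.ρ (S.ρ q), S.ρ (S.ρ (S.ρ q))} := by
  rintro q (rfl | rfl | rfl | rfl) <;>
    simp only [S.ρa, S.ρb, S.ρc, S.ρe] <;> ext x <;>
    simp only [Qset, Set.mem_insert_iff, Set.mem_singleton_iff] <;> tauto

lemma diag : S.b0 = S.ρ (S.ρ S.a0) := by
  have hmem : S.b0 ∈ ({S.a0, S.ρ S.a0, S.ρ (S.ρ S.a0), S.ρ (S.ρ (S.ρ S.a0))} : Set ℕ) := by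
    rw [← S.Qorbit S.a0 S.a0Q]
    exact S.b0Q
  have hρ2 : S.ρ (S.ρ S.a0) ∈ S.Qset := S.ρmemQ _ (S.ρmemQ _ S.a0Q)
  rcases hmem with h | h | h | h
  · exact absurd h.symm S.hab0
  · -- b0 = ρ a0 : impossible
    exfalso
    have hsymm : S.ρ.symm S.b0 = S.a0 := by rw [h]; exact Equiv.symm_apply_apply _ _
    have hmem2 : S.ρ (S.ρ S.a0) ∈ ({S.a0, S.b0, S.ρ.symm S.a0, S.ρ.symm S.b0} : Set ℕ) := by
      rw [← S.Qab]; exact hρ2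
    rcases hmem2 with h2 | h2 | h2 | h2
    · exact S.ρ2Q_ne _ S.a0Q h2
    · rw [h] at h2
      exact S.ρQ_ne _ (S.ρmemQ _ S.a0Q) h2
    · -- ρ²a0 = ρ⁻¹ a0, so ρ³ a0 = a0, so ρ⁴ a0 = ρ a0 = a0, contradiction
      have h3 : S.ρ (S.ρ (S.ρ S.a0)) = S.a0 := by
        rw [h2, Equiv.apply_symm_apply]
      have h4 := S.ρ4Q S.a0 S.a0Q
      rw [h3] at h4
      exact S.ρQ_ne _ S.a0Q h4
    · rw [hsymm] at h2
      exact S.ρ2Q_ne _ S.a0Q h2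
  · exact h
  · -- b0 = ρ³ a0 : impossible
    exfalso
    have h3 : S.ρ S.b0 = S.a0 := by rw [h, S.ρ4Q S.a0 S.a0Q]
    have hsymm : S.ρ.symm S.a0 = S.b0 := by rw [← h3]; exact Equiv.symm_apply_apply _ _
    have hmem2 : S.ρ S.a0 ∈ ({S.a0, S.b0, S.ρ.symm S.a0, S.ρ.symm S.b0} : Set ℕ) := by
      rw [← S.Qab]; exact S.ρmemQ _ S.a0Q
    rcases hmem2 with h2 | h2 | h2 | h2
    · exact S.ρQ_ne _ S.a0Q h2
    · -- ρ a0 = b0 = ρ³ a0 ⟹ a0 = ρ² a0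
      rw [h] at h2
      have := S.ρ.injective h2
      exact S.ρ2Q_ne _ S.a0Q (S.ρ.injective h2).symm
    · rw [hsymm] at h2
      -- ρ a0 = b0
      rw [h] at h2
      exact S.ρ2Q_ne _ S.a0Q (S.ρ.injective h2).symm
    · -- ρ a0 = ρ⁻¹ b0 ⟹ ρ² a0 = b0 = ρ³ a0 ⟹ a0 = ρ a0
      have h4 : S.ρ (S.ρ S.a0) = S.b0 := by
        rw [h2]; exact Equiv.apply_symm_apply _ _
      rw [h] at h4
      have := S.ρ.injective (S.ρ.injective h4)
      exact S.ρQ_ne _ S.a0Q this.symm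

/-! ### Commutation with the half turn -/

lemma σ0_eq : S.σ0 = (S.σi * S.ρ)⁻¹ := by
  have h1 : S.σ0 * (S.σi * S.ρ) = 1 := by
    rw [ρ, ← mul_assoc, ← mul_assoc]
    exact S.prod
  rw [← one_mul (S.σi * S.ρ)⁻¹, ← h1, mul_assoc, mul_inv_cancel, mul_one]

lemma dpow (j : ℕ) : ∀ {x : ℕ}, x ∈ Set.Icc 1 (2*n) →
    (((S.σi ^ j) x : ℕ) : ZMod (2*n)) = ((x : ℕ) : ZMod (2*n)) - (j : ZMod (2*n)) := by
  induction j with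
  | zero => intro x hx; simp
  | succ j ih =>
    intro x hx
    have hsplit : S.σi ^ (j+1) = S.σi ^ j * S.σi := pow_succ _ _
    rw [hsplit, Equiv.Perm.mul_apply, ih (S.ci_maps hx), S.dci hx]
    push_cast
    ring


lemma D_of_comm (hc : S.σi ^ n * S.ρ = S.ρ * S.σi ^ n) :
    ∀ z, S.f (z + (n : ZMod (2*n))) = S.f z + (n : ZMod (2*n)) := by
  have : NeZero (2*n) := S.nz
  intro z
  have hx := up_mem (m := 2*n) z
  have hy := up_mem (m := 2*n) (z + (n : ZMod (2*n)))
  have hxy : (S.σi ^ n) (up z) = up (z + (n : ZMod (2*n))) := by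
    apply down_inj (S.pow_maps hx) hy
    rw [S.dpow n hx, down_up, down_up, sub_n_eq_add]
  have hcomm : ∀ y, S.ρ ((S.σi ^ n) y) = (S.σi ^ n) (S.ρ y) := by
    intro y
    have := Equiv.Perm.ext_iff.mp hc y
    simpa using this.symm
  rw [show S.f (z + (n : ZMod (2*n))) = ((S.ρ (up (z + (n : ZMod (2*n)))) : ℕ)
    : ZMod (2*n)) from rfl, ← hxy, hcomm, S.dpow n (S.ρ_maps hx), sub_n_eq_add]
  rfl

lemma comm_of_D (hD : ∀ z, S.f (z + (n : ZMod (2*n))) = S.f z + (n : ZMod (2*n))) :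
    S.σi ^ n * S.ρ = S.ρ * S.σi ^ n := by
  have : NeZero (2*n) := S.nz
  ext x
  simp only [Equiv.Perm.mul_apply]
  by_cases hx : x ∈ Set.Icc 1 (2*n)
  · apply down_inj (S.pow_maps (S.ρ_maps hx)) (S.ρ_maps (S.pow_maps hx))
    rw [S.dpow n (S.ρ_maps hx)]
    have h2 : ((S.ρ ((S.σi ^ n) x) : ℕ) : ZMod (2*n))
        = S.f ((((S.σi ^ n) x : ℕ)) : ZMod (2*n)) := (S.f_down (S.pow_maps hx)).symm
    rw [h2, S.dpow n hx, sub_n_eq_add, sub_n_eq_add, hD, ← S.f_down hx]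
  · rw [S.pow_fix_out hx, supp_out S.ρsupp hx, S.pow_fix_out hx]

lemma mem_DQ {x : ℕ} (hx : x ∈ S.Qset) : ((x : ℕ) : ZMod (2*n)) ∈ S.DQ := by
  rcases hx with rfl | rfl | rfl | rfl <;> simp [DQ]

/-- Transfer of the symmetry condition. -/
lemma symD_of_symU (he : Even n) (hU : S.Fρ = {n/2, n, 3*n/2, 2*n}) :
    S.toCore.FS = {0, ((n/2 : ℕ) : ZMod (2*n)), (n : ZMod (2*n)),
      ((n + n/2 : ℕ) : ZMod (2*n))} := by
  have : NeZero (2*n) := S.nz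
  have hn := S.hn
  obtain ⟨t, ht⟩ := he
  have hFS : S.toCore.FS = (fun x : ℕ => ((x : ℕ) : ZMod (2*n))) '' S.Fρ := by
    rw [S.Fρ_eq, Set.image_image, Set.image_congr (fun w _ => down_up (m := 2*n) w),
      Set.image_id']
  rw [hFS, hU]
  simp only [Set.image_insert_eq, Set.image_singleton]
  have h2n0 : ((2*n : ℕ) : ZMod (2*n)) = 0 := ZMod.natCast_self _
  have h32 : (3*n/2 : ℕ) = n + n/2 := by omega
  rw [h2n0, h32]
  ext z
  simp only [Set.mem_insert_iff, Set.mem_singleton_iff]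
  tauto

lemma symU_of_symD (he : Even n)
    (hD : S.toCore.FS = {0, ((n/2 : ℕ) : ZMod (2*n)), (n : ZMod (2*n)),
      ((n + n/2 : ℕ) : ZMod (2*n))}) :
    S.Fρ = {n/2, n, 3*n/2, 2*n} := by
  have : NeZero (2*n) := S.nz
  have hn := S.hn
  obtain ⟨t, ht⟩ := he
  rw [S.Fρ_eq, hD]
  simp only [Set.image_insert_eq, Set.image_singleton]
  have h1 : up (0 : ZMod (2*n)) = 2*n := by rw [up]; simp
  have h2 : up (((n/2 : ℕ) : ZMod (2*n))) = n/2 := up_down (by simp; omega)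
  have h3 : up ((n : ZMod (2*n))) = n := by
    have := up_down (m := 2*n) (x := n) (by simp; omega)
    simpa using this
  have h4 : up (((n + n/2 : ℕ) : ZMod (2*n))) = n + n/2 := up_down (by simp; omega)
  rw [h1, h2, h3, h4]
  have h32 : (3*n/2 : ℕ) = n + n/2 := by omega
  rw [h32]
  ext z
  simp only [Set.mem_insert_iff, Set.mem_singleton_iff]
  tauto

/-- In the symmetric case, the half turn commutes with everything. -/
lemma sym_comm (he : Even n) (hU : S.Fρ = {n/2, n, 3*n/2, 2*n}) :
    Commute (S.σi ^ n) S.τ ∧ Commute (S.σi ^ n) S.σ1 ∧ Commute (S.σi ^ n) S.σ0 := by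
  have : NeZero (2*n) := S.nz
  have hn := S.hn
  obtain ⟨G⟩ := S.toCore.exists_geom
  have hsymD : Even n ∧ S.toCore.FS = {0, ((n/2 : ℕ) : ZMod (2*n)), (n : ZMod (2*n)),
      ((n + n/2 : ℕ) : ZMod (2*n))} := ⟨he, S.symD_of_symU he hU⟩
  have hD := S.toCore.shift_of_symm G hsymD
  have hcρ : S.σi ^ n * S.ρ = S.ρ * S.σi ^ n := S.comm_of_D hD
  have hq := S.toCore.qshift_of_symm G hsymD ((S.a0 : ℕ) : ZMod (2*n))
    (by rw [toCore_QS]; exact S.mem_DQ S.a0Q)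
  have hq2 : ((S.b0 : ℕ) : ZMod (2*n)) = ((S.a0 : ℕ) : ZMod (2*n)) + (n : ZMod (2*n)) := by
    have h1 : S.toCore.f (S.toCore.f ((S.a0 : ℕ) : ZMod (2*n)))
        = ((S.ρ (S.ρ S.a0) : ℕ) : ZMod (2*n)) := by
      show S.f (S.f _) = _
      rw [S.f_down (S.Qset_sub S.a0Q), S.f_down (S.ρ_maps (S.Qset_sub S.a0Q))]
    rw [h1, ← S.diag] at hq
    exact hq
  have hna0 : (S.σi ^ n) S.a0 = S.b0 := by
    apply down_inj (S.pow_maps S.ha0) S.hb0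
    rw [S.dpow n S.ha0, sub_n_eq_add, ← hq2]
  have hnb0 : (S.σi ^ n) S.b0 = S.a0 := by
    apply down_inj (S.pow_maps S.hb0) S.ha0
    rw [S.dpow n S.hb0, sub_n_eq_add, hq2, add_assoc, Core.two_n_zero, add_zero]
  have hinv : ∀ y, (S.σi ^ n) ((S.σi ^ n) y) = y := by
    intro y
    rw [← Equiv.Perm.mul_apply, ← pow_add]
    have : S.σi ^ (n + n) = 1 := by
      rw [show n + n = 2*n by omega]
      exact S.ci_pow_2n
    rw [this]
    rfl
  have hτc : Commute (S.σi ^ n) S.τ := by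
    apply Equiv.ext
    intro y
    simp only [Equiv.Perm.mul_apply]
    by_cases hy1 : y = S.a0
    · rw [hy1, S.τa0, hnb0, hna0, S.τb0]
    by_cases hy2 : y = S.b0
    · rw [hy2, S.τb0, hna0, hnb0, S.τa0]
    · rw [S.τ_out hy1 hy2]
      refine (S.τ_out (fun hc => ?_) (fun hc => ?_)).symm
      · apply hy2
        have := congrArg (S.σi ^ n) hc
        rw [hinv, hna0] at this
        exact this
      · apply hy1
        have := congrArg (S.σi ^ n) hc
        rw [hinv, hnb0] at this
        exact this
  have hσ1c : Commute (S.σi ^ n) S.σ1 := by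
    rw [S.στ1]
    exact Commute.mul_right hcρ hτc
  have hσ0c : Commute (S.σi ^ n) S.σ0 := by
    rw [S.σ0_eq]
    exact Commute.inv_right (Commute.mul_right ((Commute.refl S.σi).pow_left n) hcρ)
  exact ⟨hτc, hσ1c, hσ0c⟩

/-- A nontrivial power of σi commuting with τ must be the half turn. -/
lemma comm_τ_n {j : ℕ} (h0 : 0 < j) (hj : j < 2*n) (hc : Commute (S.σi ^ j) S.τ) :
    j = n := by
  have hn := S.hn
  have hpt : ∀ y, (S.σi ^ j) (S.τ y) = S.τ ((S.σi ^ j) y) := by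
    intro y
    have := Equiv.Perm.ext_iff.mp hc.eq y
    simpa using this
  have ha := hpt S.a0
  rw [S.τa0] at ha
  by_cases hw1 : (S.σi ^ j) S.a0 = S.a0
  · exact absurd (S.gen_fix_lt hj S.ha0 hw1) (by omega)
  by_cases hw2 : (S.σi ^ j) S.a0 = S.b0
  · rw [hw2, S.τb0] at ha
    -- σi^j b0 = a0, hence σi^(2j) a0 = a0
    have h2 : (S.σi ^ (j + j)) S.a0 = S.a0 := by
      rw [pow_add, Equiv.Perm.mul_apply, hw2, ha]
    rcases Nat.lt_or_ge (j+j) (2*n) with hlt | hge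
    · exact absurd (S.gen_fix_lt hlt S.ha0 h2) (by omega)
    · have hsplit : S.σi ^ (j + j) = S.σi ^ (2*n) * S.σi ^ (j + j - 2*n) := by
        rw [← pow_add]
        congr 1
        omega
      rw [hsplit, S.ci_pow_2n, one_mul] at h2
      have := S.gen_fix_lt (by omega : j + j - 2*n < 2*n) S.ha0 h2
      omega
  · rw [S.τ_out hw1 hw2] at ha
    exact absurd ((S.σi ^ j).injective ha) (Ne.symm S.hab0)

/-! ### The set of special tuples in the conjugacy class -/

lemma conj_eq_of_commute {g h : Equiv.Perm ℕ} (hc : Commute h g) : h⁻¹ * g * h = g := by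
  rw [mul_assoc, ← hc.eq, ← mul_assoc, inv_mul_cancel, one_mul]

lemma swap_conj (γ : Equiv.Perm ℕ) (a b : ℕ) :
    γ⁻¹ * Equiv.swap a b * γ = Equiv.swap (γ⁻¹ a) (γ⁻¹ b) := by
  have h := (Equiv.swap_apply_apply (γ⁻¹) a b)
  simpa using h.symm

def γp (x : ℕ) : Equiv.Perm ℕ := S.σi ^ (2*n - x)

def Tup (x : ℕ) : Equiv.Perm ℕ × Equiv.Perm ℕ × Equiv.Perm ℕ × Equiv.Perm ℕ :=
  ((S.γp x)⁻¹ * S.σ0 * (S.γp x), (S.γp x)⁻¹ * S.σi * (S.γp x),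
   (S.γp x)⁻¹ * S.σ1 * (S.γp x), (S.γp x)⁻¹ * S.τ * (S.γp x))

def TT : Set (Equiv.Perm ℕ × Equiv.Perm ℕ × Equiv.Perm ℕ × Equiv.Perm ℕ) :=
  {p | (∃ γ : Equiv.Perm ℕ, {x | γ x ≠ x} ⊆ Set.Icc 1 (2*n) ∧
      p = (γ⁻¹ * S.σ0 * γ, γ⁻¹ * S.σi * γ, γ⁻¹ * S.σ1 * γ, γ⁻¹ * S.τ * γ)) ∧
    IsSpecial n p.1 p.2.1 p.2.2.1 p.2.2.2}

lemma γp_supp (x : ℕ) : {y | (S.γp x) y ≠ y} ⊆ Set.Icc 1 (2*n) :=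
  le_trans (supp_pow_subset _) (le_of_eq S.cisupp)

lemma γp_comm (x : ℕ) : Commute (S.γp x) S.σi := ((Commute.refl S.σi).pow_left _)

lemma γp_apply_N {x : ℕ} (hx : x ∈ Set.Icc 1 (2*n)) : (S.γp x) (2*n) = x := by
  simp only [Set.mem_Icc] at hx
  rw [γp, S.ci_pow _ (by omega)]
  omega

lemma conj_special {x : ℕ} (hx : x ∈ Set.Icc 1 (2*n)) (h1 : S.σ1 x = x) (h2 : S.τ x = x) :
    IsSpecial n ((S.γp x)⁻¹ * S.σ0 * (S.γp x)) ((S.γp x)⁻¹ * S.σi * (S.γp x))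
      ((S.γp x)⁻¹ * S.σ1 * (S.γp x)) ((S.γp x)⁻¹ * S.τ * (S.γp x)) := by
  set γ := S.γp x with hγ
  have hγs := S.γp_supp x
  have hγs' : {y | γ⁻¹ y ≠ y} ⊆ Set.Icc 1 (2*n) := by rw [supp_inv]; exact hγs
  have hIcc := Icc_iff_of_supp hγs
  have hci : γ⁻¹ * S.σi * γ = S.σi := conj_eq_of_commute (S.γp_comm x)
  have hγN : γ (2*n) = x := S.γp_apply_N hx
  have happly : ∀ (g : Equiv.Perm ℕ) (y : ℕ), (γ⁻¹ * g * γ) y = γ⁻¹ (g (γ y)) := by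
    intro g y; rfl
  have hinvx : γ⁻¹ x = 2*n := by rw [← hγN]; simp
  have hNIcc : (2*n : ℕ) ∈ Set.Icc 1 (2*n) := by simp; have := S.hn; omega
  constructor
  · -- IsAdmissible
    refine ⟨?_, ?_, ?_, ?_, ?_, ?_, ?_, ?_, ?_⟩
    · calc (γ⁻¹ * S.σ0 * γ) * (γ⁻¹ * S.σi * γ) * (γ⁻¹ * S.σ1 * γ) * (γ⁻¹ * S.τ * γ)
          = γ⁻¹ * (S.σ0 * S.σi * S.σ1 * S.τ) * γ := by group
        _ = 1 := by rw [S.prod]; group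
    · calc (γ⁻¹ * S.σ0 * γ) * (γ⁻¹ * S.σ0 * γ) = γ⁻¹ * (S.σ0 * S.σ0) * γ := by group
        _ = 1 := by rw [S.s0inv]; group
    · ext y
      simp only [Set.mem_setOf_eq, happly]
      have : γ⁻¹ (S.σ0 (γ y)) ≠ y ↔ S.σ0 (γ y) ≠ γ y := by
        rw [not_iff_not]
        constructor
        · intro h; have := congrArg γ h; simpa using this
        · intro h; rw [h]; simp
      rw [this]
      have h0 : S.σ0 (γ y) ≠ γ y ↔ γ y ∈ Set.Icc 1 (2*n) := by
        rw [← S.s0supp]; rfl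
      rw [h0, hIcc]
    · rw [hci]; exact S.cyc
    · rw [hci]; exact S.cisupp
    · calc (γ⁻¹ * S.σ1 * γ) * (γ⁻¹ * S.σ1 * γ) = γ⁻¹ * (S.σ1 * S.σ1) * γ := by group
        _ = 1 := by rw [S.s1inv]; group
    · intro y hy
      simp only [Set.mem_setOf_eq, happly] at hy
      have : S.σ1 (γ y) ≠ γ y := by
        intro h; apply hy; rw [h]; simp
      rw [← hIcc y]
      exact S.s1supp this
    · have hset : {y | (γ⁻¹ * S.σ1 * γ) y ≠ y} = ⇑γ ⁻¹' {y | S.σ1 y ≠ y} := by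
        ext y
        simp only [Set.mem_setOf_eq, happly, Set.mem_preimage]
        rw [not_iff_not]
        constructor
        · intro h; have := congrArg γ h; simpa using this
        · intro h; rw [h]; simp
      rw [hset, show ⇑γ ⁻¹' {y | S.σ1 y ≠ y} = ⇑γ⁻¹ '' {y | S.σ1 y ≠ y} from
        (Equiv.image_eq_preimage_symm γ⁻¹ _).symm,
        Set.ncard_image_of_injective _ (Equiv.injective _)]
      exact S.s1card
    · refine ⟨γ⁻¹ S.a0, γ⁻¹ S.b0, fun h => S.hab0 (Equiv.injective _ h), ?_, ?_, ?_⟩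
      · rw [← supp_inv] at hγs
        rw [Icc_iff_of_supp (g := γ⁻¹) (by rw [supp_inv, hγ]; exact S.γp_supp x)]
        exact S.ha0
      · rw [Icc_iff_of_supp (g := γ⁻¹) (by rw [supp_inv, hγ]; exact S.γp_supp x)]
        exact S.hb0
      · rw [S.hτ]; exact (swap_conj γ S.a0 S.b0)
  · refine ⟨?_, ?_, ?_, ?_⟩
    · rw [hci]; exact S.ci1
    · rw [hci]; exact S.cij
    · rw [happly, hγN, h1, hinvx]
    · rw [happly, hγN, h2, hinvx]

lemma Fρ_fix {x : ℕ} (hx : x ∈ S.Fρ) : S.σ1 x = x ∧ S.τ x = x := by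
  have hρx := hx.2
  have hQ : x ∉ S.Qset := fun hq => S.ρQ_ne x hq hρx
  have hτ : S.τ x = x := by
    refine S.τ_out (fun h => hQ ?_) (fun h => hQ ?_)
    · rw [h]; exact S.a0Q
    · rw [h]; exact S.b0Q
  have hσ1 : S.σ1 x = x := by
    conv_lhs => rw [S.στ1, Equiv.Perm.mul_apply, hτ]
    exact hρx
  exact ⟨hσ1, hτ⟩

lemma ci_unique {g : Equiv.Perm ℕ} (hsupp : {x | g x ≠ x} = Set.Icc 1 (2*n))
    (h1 : g 1 = 2*n) (hj : ∀ j, 2 ≤ j → j ≤ 2*n → g j = j - 1) : g = S.σi := by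
  have hn := S.hn
  ext y
  by_cases hy : y ∈ Set.Icc 1 (2*n)
  · simp only [Set.mem_Icc] at hy
    rcases Nat.lt_or_ge y 2 with h2 | h2
    · have : y = 1 := by omega
      rw [this, h1, S.ci1]
    · rw [hj y h2 hy.2, S.cij y h2 hy.2]
  · rw [supp_out (le_of_eq hsupp) hy, S.ci_out hy]

lemma TT_eq : S.TT = S.Tup '' S.Fρ := by
  ext p
  constructor
  · rintro ⟨⟨γ, hγs, rfl⟩, hspec⟩
    obtain ⟨hadm, hci1, hcij, hσ1N, hτN⟩ := hspec
    obtain ⟨_, _, _, _, hcisupp, _⟩ := hadm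
    have hci : γ⁻¹ * S.σi * γ = S.σi := S.ci_unique hcisupp hci1 hcij
    have hcomm : γ * S.σi = S.σi * γ := by
      have := congrArg (fun g => γ * g) hci
      simp only [← mul_assoc, mul_inv_cancel, one_mul] at this
      rw [this]
    have hγeq : γ = S.σi ^ (2*n - γ (2*n)) := S.cent hcomm hγs
    set x := γ (2*n) with hx
    have hxI : x ∈ Set.Icc 1 (2*n) := supp_maps hγs (by simp; have := S.hn; omega)
    have hγγp : γ = S.γp x := hγeq
    have hσ1x : S.σ1 x = x := by
      have h := hσ1N
      simp only [Equiv.Perm.mul_apply] at h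
      have := congrArg γ h
      rw [Equiv.Perm.coe_inv, Equiv.apply_symm_apply] at this
      exact this
    have hτx : S.τ x = x := by
      have h := hτN
      simp only [Equiv.Perm.mul_apply] at h
      have := congrArg γ h
      rw [Equiv.Perm.coe_inv, Equiv.apply_symm_apply] at this
      exact this
    refine ⟨x, ⟨hxI, ?_⟩, ?_⟩
    · rw [ρ, Equiv.Perm.mul_apply, hτx, hσ1x]
    · rw [Tup, ← hγγp]
  · rintro ⟨x, hx, rfl⟩
    obtain ⟨h1, h2⟩ := S.Fρ_fix hx
    exact ⟨⟨S.γp x, S.γp_supp x, rfl⟩, S.conj_special hx.1 h1 h2⟩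

lemma Tup_shift {x : ℕ} (hx : 1 ≤ x) (hxn : x ≤ n)
    (hcτ : Commute (S.σi ^ n) S.τ) (hcσ1 : Commute (S.σi ^ n) S.σ1)
    (hcσ0 : Commute (S.σi ^ n) S.σ0) :
    S.Tup (x + n) = S.Tup x := by
  have hsplit : S.γp x = S.σi ^ n * S.γp (x + n) := by
    rw [γp, γp, ← pow_add]
    congr 1
    omega
  have key : ∀ g : Equiv.Perm ℕ, Commute (S.σi ^ n) g →
      (S.γp x)⁻¹ * g * (S.γp x) = (S.γp (x+n))⁻¹ * g * (S.γp (x+n)) := by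
    intro g hc
    rw [hsplit, mul_inv_rev]
    have h1 : (S.σi ^ n)⁻¹ * g * (S.σi ^ n) = g := conj_eq_of_commute hc
    calc (S.γp (x+n))⁻¹ * (S.σi ^ n)⁻¹ * g * (S.σi ^ n * S.γp (x+n))
        = (S.γp (x+n))⁻¹ * ((S.σi ^ n)⁻¹ * g * S.σi ^ n) * S.γp (x+n) := by group
      _ = _ := by rw [h1]
  have hcσi : Commute (S.σi ^ n) S.σi := (Commute.refl S.σi).pow_left n
  rw [Tup, Tup, key _ hcσ0, key _ hcσi, key _ hcσ1, key _ hcτ]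

lemma Tup_inj_cond {x y : ℕ} (hy : y ≤ 2*n) (hlt : x < y) (heq : S.Tup x = S.Tup y) :
    Commute (S.σi ^ (y - x)) S.τ ∧ Commute (S.σi ^ (y - x)) S.σ1 := by
  have hsplit : S.γp x = S.σi ^ (y - x) * S.γp y := by
    rw [γp, γp, ← pow_add]
    congr 1
    omega
  have key : ∀ g : Equiv.Perm ℕ,
      (S.γp x)⁻¹ * g * (S.γp x) = (S.γp y)⁻¹ * g * (S.γp y) →
      Commute (S.σi ^ (y - x)) g := by
    intro g hg
    rw [hsplit, mul_inv_rev] at hg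
    have h2 : (S.σi ^ (y-x))⁻¹ * g * (S.σi ^ (y-x)) = g := by
      have h3 := congrArg (fun w => S.γp y * w * (S.γp y)⁻¹) hg
      calc (S.σi ^ (y-x))⁻¹ * g * (S.σi ^ (y-x))
          = S.γp y * ((S.γp y)⁻¹ * (S.σi ^ (y-x))⁻¹ * g * (S.σi ^ (y-x) * S.γp y))
            * (S.γp y)⁻¹ := by group
        _ = S.γp y * ((S.γp y)⁻¹ * g * S.γp y) * (S.γp y)⁻¹ := by rw [h3]
        _ = g := by group
    show S.σi ^ (y-x) * g = g * S.σi ^ (y-x)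
    calc S.σi ^ (y-x) * g = S.σi ^ (y-x) * ((S.σi ^ (y-x))⁻¹ * g * (S.σi ^ (y-x))) := by
          rw [h2]
      _ = g * S.σi ^ (y-x) := by group
  have e1 := congrArg (fun p : Equiv.Perm ℕ × Equiv.Perm ℕ × Equiv.Perm ℕ × Equiv.Perm ℕ
    => p.2.2.1) heq
  have e2 := congrArg (fun p : Equiv.Perm ℕ × Equiv.Perm ℕ × Equiv.Perm ℕ × Equiv.Perm ℕ
    => p.2.2.2) heq
  simp only [Tup] at e1 e2
  exact ⟨key _ e2, key _ e1⟩

theorem count_sym (he : Even n) (hU : S.Fρ = {n/2, n, 3*n/2, 2*n}) : S.TT.ncard = 2 := by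
  have hn := S.hn
  obtain ⟨t, ht⟩ := he
  obtain ⟨hcτ, hcσ1, hcσ0⟩ := S.sym_comm ⟨t, ht⟩ hU
  rw [S.TT_eq, hU]
  simp only [Set.image_insert_eq, Set.image_singleton]
  have h1 : S.Tup (3*n/2) = S.Tup (n/2) := by
    rw [show 3*n/2 = n/2 + n by omega]
    exact S.Tup_shift (by omega) (by omega) hcτ hcσ1 hcσ0
  have h2 : S.Tup (2*n) = S.Tup n := by
    rw [show 2*n = n + n by omega]
    exact S.Tup_shift (by omega) le_rfl hcτ hcσ1 hcσ0
  rw [h1, h2]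
  have hset : ({S.Tup (n/2), S.Tup n, S.Tup (n/2), S.Tup n} :
      Set (Equiv.Perm ℕ × Equiv.Perm ℕ × Equiv.Perm ℕ × Equiv.Perm ℕ))
      = {S.Tup (n/2), S.Tup n} := by
    ext p
    simp only [Set.mem_insert_iff, Set.mem_singleton_iff]
    tauto
  rw [hset]
  refine Set.ncard_pair (fun h => ?_)
  obtain ⟨hc, _⟩ := S.Tup_inj_cond (by omega : n ≤ 2*n) (by omega) h
  have := S.comm_τ_n (by omega : 0 < n - n/2) (by omega) hc
  omega

theorem count_nonsym (hns : ¬(Even n ∧ S.Fρ = {n/2, n, 3*n/2, 2*n})) :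
    S.TT.ncard = 4 := by
  have hn := S.hn
  have key : ∀ x y, x ∈ S.Fρ → y ∈ S.Fρ → x < y → S.Tup x = S.Tup y → False := by
    intro x y hx hy hlt heq
    have hyI := hy.1
    simp only [Set.mem_Icc] at hyI
    have hxI := hx.1
    simp only [Set.mem_Icc] at hxI
    obtain ⟨hcτ', hcσ1'⟩ := S.Tup_inj_cond hyI.2 hlt heq
    have hj := S.comm_τ_n (by omega : 0 < y - x) (by omega : y - x < 2*n) hcτ'
    rw [hj] at hcτ' hcσ1'
    have hcρ : Commute (S.σi ^ n) S.ρ := by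
      rw [ρ]
      exact hcσ1'.mul_right hcτ'
    have hD := S.D_of_comm hcρ.eq
    obtain ⟨G⟩ := S.toCore.exists_geom
    have hsym := S.toCore.symm_of_shift G hD
    exact hns ⟨hsym.1, S.symU_of_symD hsym.1 hsym.2⟩
  rw [S.TT_eq, Set.ncard_image_of_injOn, S.Fρ_ncard]
  intro x hx y hy heq
  by_contra hxy
  rcases lt_trichotomy x y with h | h | h
  · exact key x y hx hy h heq
  · exact hxy h
  · exact key y x hy hx h heq.symm

end Setup
end Stmt19

theorem stmt19 (n : ℕ) (hn : 4 ≤ n) (σ0 σi σ1 τ : Equiv.Perm ℕ)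
    (hsp : IsSpecial n σ0 σi σ1 τ) (h4 : HasFourCycleType n (σ1 * τ)) :
    ((Even n ∧ {x | x ∈ Set.Icc 1 (2*n) ∧ (σ1 * τ) x = x} =
        ({n/2, n, 3*n/2, 2*n} : Set ℕ)) →
      {p : Equiv.Perm ℕ × Equiv.Perm ℕ × Equiv.Perm ℕ × Equiv.Perm ℕ |
        (∃ γ : Equiv.Perm ℕ, {x | γ x ≠ x} ⊆ Set.Icc 1 (2*n) ∧
          p = (γ⁻¹ * σ0 * γ, γ⁻¹ * σi * γ, γ⁻¹ * σ1 * γ, γ⁻¹ * τ * γ)) ∧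
        IsSpecial n p.1 p.2.1 p.2.2.1 p.2.2.2}.ncard = 2) ∧
    (¬(Even n ∧ {x | x ∈ Set.Icc 1 (2*n) ∧ (σ1 * τ) x = x} =
        ({n/2, n, 3*n/2, 2*n} : Set ℕ)) →
      {p : Equiv.Perm ℕ × Equiv.Perm ℕ × Equiv.Perm ℕ × Equiv.Perm ℕ |
        (∃ γ : Equiv.Perm ℕ, {x | γ x ≠ x} ⊆ Set.Icc 1 (2*n) ∧
          p = (γ⁻¹ * σ0 * γ, γ⁻¹ * σi * γ, γ⁻¹ * σ1 * γ, γ⁻¹ * τ * γ)) ∧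
        IsSpecial n p.1 p.2.1 p.2.2.1 p.2.2.2}.ncard = 4) := by
  obtain ⟨hadm, hci1, hcij, hσ1N, hτN⟩ := hsp
  obtain ⟨hprod, hσ0inv, hσ0supp, hcyc, hcisupp, hσ1inv, hσ1supp, hσ1card,
    a0, b0, hab0, ha0, hb0, hτeq⟩ := hadm
  obtain ⟨a, b, c, e, π, hab, hac, hae, hbc, hbe, hce, hπ2, hπQ, hπcard, hρeq⟩ := h4
  let S : Stmt19.Setup n := ⟨σ0, σi, σ1, τ, hn, hprod, hσ0inv, hσ0supp, hcisupp,
    hσ1inv, hσ1supp, hcyc, hσ1card, hci1, hcij, hσ1N, hτN, a0, b0, hab0, ha0, hb0, hτeq,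
    a, b, c, e, π, hab, hac, hae, hbc, hbe, hce, hπ2, hπQ, hπcard, hρeq⟩
  constructor
  · rintro ⟨he, hFset⟩
    exact S.count_sym he hFset
  · intro hns
    exact S.count_nonsym hns
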